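/- arXiv:2106.04860 — 9 statements merged into one kernel-verified Lean document; each statement's English description precedes it below -/
import Mathlib

section
/- Let n ≥ 1 be an integer and K > 0, and suppose b̂ > 0 satisfies b̂ ≤ b* and ψ(b̂)/ψ'(b̂) − φ_{nK}(b̂)/φ_{nK}'(b̂) = K/r. Set D₁ := (−(K/r)·φ_{nK}'(b̂)) / (φ_{nK}(b̂)ψ'(b̂) − φ_{nK}'(b̂)ψ(b̂)) and D₄ := (−(K/r)·ψ'(b̂)) / (φ_{nK}(b̂)ψ'(b̂) − φ_{nK}'(b̂)ψ(b̂)), and define V(x) := D₁ψ(x) for 0 ≤ x ≤ b̂ and V(x) := D₄φ_{nK}(x) + K/r for x ≥ b̂. Then V is continuously differentiable on (0,∞) with V'(b̂) = 1, and for every x > 0 with x ≠ b̂ and every λ ∈ [0,K] the Hamilton–Jacobi–Bellman variational inequality ½σ(x)²V''(x) + (μ(x) − (n−1)K·𝟙_{x≥b̂} − λ)·V'(x) − r·V(x) + λ ≤ 0 holds, with equality when λ = K·𝟙_{x≥b̂}. -/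
open Set Filter

set_option maxHeartbeats 1000000

/-- verification for the symmetric threshold Nash equilibrium with
positive threshold b̂: the candidate equilibrium value function V (glued from
D₁ψ on [0,b̂] and D₄φ_{nK} + K/r on [b̂,∞)) is C¹ on (0,∞) with V'(b̂) = 1, and the
HJB variational inequality holds for all x > 0, x ≠ b̂ and λ ∈ [0,K], with equality
at λ = K·𝟙_{x ≥ b̂}. -/
theorem stmt_0
    (r c : ℝ) (hr : 0 < r) (hc : 0 < c)
    (μ σ : ℝ → ℝ) (hμ : ContDiff ℝ 1 μ) (hσ : ContDiff ℝ 1 σ)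
    (hσpos : ∀ x ≥ (0:ℝ), 0 < σ x ^ 2)
    (hμderiv : ∀ x ≥ (0:ℝ), deriv μ x < r)
    (hμ0 : 0 < μ 0)
    (hμc : ∀ x ≥ c, μ x ≤ r * x - 1 / c)
    (ψ : ℝ → ℝ) (hψC : ContDiff ℝ 3 ψ)
    (hψ0 : ψ 0 = 0) (hψd0 : deriv ψ 0 = 1)
    (hψpos : ∀ x > (0:ℝ), 0 < ψ x)
    (hψmono : MonotoneOn ψ (Ici (0:ℝ)))
    (hψODE : ∀ x ≥ (0:ℝ),
      (1/2) * σ x ^ 2 * deriv (deriv ψ) x + μ x * deriv ψ x - r * ψ x = 0)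
    (hψdpos : ∀ x ≥ (0:ℝ), 0 < deriv ψ x)
    (bstar : ℝ) (hbstar : 0 < bstar)
    (hconc : ∀ x, 0 ≤ x → x < bstar → deriv (deriv ψ) x < 0)
    (hconv : ∀ x, bstar < x → 0 < deriv (deriv ψ) x)
    (φ : ℝ → ℝ → ℝ)
    (hφC : ∀ A ≥ (0:ℝ), ContDiff ℝ 2 (φ A))
    (hφ0 : ∀ A ≥ (0:ℝ), φ A 0 = 1)
    (hφpos : ∀ A ≥ (0:ℝ), ∀ x ≥ (0:ℝ), 0 < φ A x)
    (hφanti : ∀ A ≥ (0:ℝ), AntitoneOn (φ A) (Ici (0:ℝ)))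
    (hφlim : ∀ A ≥ (0:ℝ), Tendsto (φ A) atTop (nhds 0))
    (hφODE : ∀ A ≥ (0:ℝ), ∀ x ≥ (0:ℝ),
      (1/2) * σ x ^ 2 * deriv (deriv (φ A)) x + (μ x - A) * deriv (φ A) x - r * φ A x = 0)
    (hφdneg : ∀ A ≥ (0:ℝ), ∀ x ≥ (0:ℝ), deriv (φ A) x < 0)
    (hφddpos : ∀ A ≥ (0:ℝ), ∀ x ≥ (0:ℝ), 0 < deriv (deriv (φ A)) x)
    (n : ℕ) (hn : 1 ≤ n) (K : ℝ) (hK : 0 < K)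
    (bh : ℝ) (hbh : 0 < bh) (hbhle : bh ≤ bstar)
    (hbheq : ψ bh / deriv ψ bh
      - φ ((n : ℝ) * K) bh / deriv (φ ((n : ℝ) * K)) bh = K / r)
    (D1 D4 : ℝ)
    (hD1 : D1 = (-(K / r) * deriv (φ ((n : ℝ) * K)) bh) /
      (φ ((n : ℝ) * K) bh * deriv ψ bh - deriv (φ ((n : ℝ) * K)) bh * ψ bh))
    (hD4 : D4 = (-(K / r) * deriv ψ bh) /
      (φ ((n : ℝ) * K) bh * deriv ψ bh - deriv (φ ((n : ℝ) * K)) bh * ψ bh))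
    (V : ℝ → ℝ)
    (hVlo : ∀ x, 0 ≤ x → x ≤ bh → V x = D1 * ψ x)
    (hVhi : ∀ x ≥ bh, V x = D4 * φ ((n : ℝ) * K) x + K / r) :
    ContDiffOn ℝ 1 V (Ioi (0:ℝ)) ∧
    deriv V bh = 1 ∧
    (∀ x, 0 < x → x ≠ bh → ∀ l ∈ Icc (0:ℝ) K,
      (1/2) * σ x ^ 2 * deriv (deriv V) x
        + (μ x - ((n : ℝ) - 1) * K * (if bh ≤ x then 1 else 0) - l) * deriv V x
        - r * V x + l ≤ 0) ∧
    (∀ x, 0 < x → x ≠ bh →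
      (1/2) * σ x ^ 2 * deriv (deriv V) x
        + (μ x - ((n : ℝ) - 1) * K * (if bh ≤ x then 1 else 0)
            - K * (if bh ≤ x then 1 else 0)) * deriv V x
        - r * V x + K * (if bh ≤ x then 1 else 0) = 0) := by
  set A : ℝ := (n : ℝ) * K with hA_def
  have hA : (0:ℝ) ≤ A := by positivity
  set W : ℝ → ℝ := φ A with hW_def
  have hrne : r ≠ 0 := ne_of_gt hr
  have hWC : ContDiff ℝ 2 W := hφC A hA
  have hWdiff : Differentiable ℝ W := hWC.differentiable (by norm_num)
  have hψdiff : Differentiable ℝ ψ := hψC.differentiable (by norm_num)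
  have hψdC : ContDiff ℝ 2 (deriv ψ) := by
    have h3 : ContDiff ℝ ((2:ℕ) + 1) ψ := by exact_mod_cast hψC
    exact_mod_cast (contDiff_succ_iff_deriv.mp h3).2.2
  have hWdC : ContDiff ℝ 1 (deriv W) := by
    have h3 : ContDiff ℝ ((1:ℕ) + 1) W := by exact_mod_cast hWC
    exact_mod_cast (contDiff_succ_iff_deriv.mp h3).2.2
  have hψdcont : Continuous (deriv ψ) := hψdC.continuous
  have hWdcont : Continuous (deriv W) := hWdC.continuous
  have hψddiff : Differentiable ℝ (deriv ψ) := hψdC.differentiable (by norm_num)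
  have hWddiff : Differentiable ℝ (deriv W) := hWdC.differentiable (by norm_num)
  have hψb : 0 < ψ bh := hψpos bh hbh
  have hψdb : 0 < deriv ψ bh := hψdpos bh hbh.le
  have hWb : 0 < W bh := hφpos A hA bh hbh.le
  have hWdb : deriv W bh < 0 := hφdneg A hA bh hbh.le
  set Wr : ℝ := W bh * deriv ψ bh - deriv W bh * ψ bh with hWr_def
  have hWrpos : 0 < Wr := by
    have h1 : 0 < W bh * deriv ψ bh := mul_pos hWb hψdb
    have h2 : deriv W bh * ψ bh < 0 := mul_neg_of_neg_of_pos hWdb hψb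
    rw [hWr_def]; linarith
  have hWrne : Wr ≠ 0 := ne_of_gt hWrpos
  have hkey : ψ bh * deriv W bh - W bh * deriv ψ bh
      = K / r * (deriv ψ bh * deriv W bh) := by
    have h := hbheq
    have hp : deriv ψ bh ≠ 0 := ne_of_gt hψdb
    have hq : deriv W bh ≠ 0 := ne_of_lt hWdb
    rw [div_sub_div _ _ hp hq] at h
    have h2 := (div_eq_iff (mul_ne_zero hp hq)).mp h
    linear_combination h2
  have hD1p : D1 * deriv ψ bh = 1 := by
    rw [hD1, div_mul_eq_mul_div, div_eq_one_iff_eq hWrne, hWr_def]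
    linear_combination hkey
  have hD4q : D4 * deriv W bh = 1 := by
    rw [hD4, div_mul_eq_mul_div, div_eq_one_iff_eq hWrne, hWr_def]
    linear_combination hkey
  have hKr : 0 < K / r := div_pos hK hr
  have hD1pos : 0 < D1 := by
    rw [hD1]
    apply div_pos _ hWrpos
    nlinarith
  have hD4neg : D4 < 0 := by
    rw [hD4]
    apply div_neg_of_neg_of_pos _ hWrpos
    nlinarith
  set g : ℝ → ℝ := fun x => if x ≤ bh then D1 * deriv ψ x else D4 * deriv W x with hg_def
  have hgb : g bh = 1 := by
    simp only [hg_def]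
    rw [if_pos le_rfl]
    exact hD1p
  have hψhas : ∀ x : ℝ, HasDerivAt (fun y => D1 * ψ y) (D1 * deriv ψ x) x :=
    fun x => ((hψdiff x).hasDerivAt).const_mul D1
  have hWhas : ∀ x : ℝ, HasDerivAt (fun y => D4 * W y + K / r) (D4 * deriv W x) x :=
    fun x => (((hWdiff x).hasDerivAt).const_mul D4).add_const _
  have hVg : ∀ x, 0 < x → HasDerivAt V (g x) x := by
    intro x hx
    rcases lt_trichotomy x bh with hlt | heq | hgt
    · have hEq : V =ᶠ[nhds x] fun y => D1 * ψ y := by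
        filter_upwards [Ioo_mem_nhds hx hlt] with y hy
        exact hVlo y hy.1.le hy.2.le
      have h := (hψhas x).congr_of_eventuallyEq hEq
      have hgx : g x = D1 * deriv ψ x := by
        simp only [hg_def]; rw [if_pos hlt.le]
      rw [hgx]; exact h
    · subst heq
      have hl : HasDerivWithinAt V 1 (Iic x) x := by
        have hbase : HasDerivWithinAt (fun y => D1 * ψ y) 1 (Iic x) x := by
          have h := (hψhas x).hasDerivWithinAt (s := Iic x)
          rwa [hD1p] at h
        have hEq : V =ᶠ[nhdsWithin x (Iic x)] fun y => D1 * ψ y := by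
          filter_upwards [eventually_nhdsWithin_of_eventually_nhds
            (isOpen_Ioi.eventually_mem (show x ∈ Ioi (0:ℝ) from hx)),
            eventually_mem_nhdsWithin] with y hy1 hy2
          exact hVlo y (le_of_lt hy1) hy2
        exact hbase.congr_of_eventuallyEq hEq (hVlo x hx.le le_rfl)
      have hri : HasDerivWithinAt V 1 (Ici x) x := by
        have hbase : HasDerivWithinAt (fun y => D4 * W y + K / r) 1 (Ici x) x := by
          have h := (hWhas x).hasDerivWithinAt (s := Ici x)
          rwa [hD4q] at h
        have hEq : V =ᶠ[nhdsWithin x (Ici x)] fun y => D4 * W y + K / r := by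
          filter_upwards [eventually_mem_nhdsWithin] with y hy
          exact hVhi y hy
        exact hbase.congr_of_eventuallyEq hEq (hVhi x le_rfl)
      have h := hl.union hri
      rw [Iic_union_Ici] at h
      rw [hgb]
      exact hasDerivWithinAt_univ.mp h
    · have hEq : V =ᶠ[nhds x] fun y => D4 * W y + K / r := by
        filter_upwards [isOpen_Ioi.eventually_mem (show x ∈ Ioi bh from hgt)] with y hy
        exact hVhi y (le_of_lt hy)
      have h := (hWhas x).congr_of_eventuallyEq hEq
      have hgx : g x = D4 * deriv W x := by
        simp only [hg_def]; rw [if_neg (not_le.mpr hgt)]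
      rw [hgx]; exact h
  have hderiv : ∀ x, 0 < x → deriv V x = g x := fun x hx => (hVg x hx).deriv
  have hdVb : deriv V bh = 1 := by rw [hderiv bh hbh, hgb]
  have hgcont : Continuous g := by
    rw [hg_def]
    exact Continuous.if_le (continuous_const.mul hψdcont) (continuous_const.mul hWdcont)
      continuous_id continuous_const (fun x hx => by rw [hx, hD1p, hD4q])
  have hC1 : ContDiffOn ℝ 1 V (Ioi (0:ℝ)) := by
    have hdiff : DifferentiableOn ℝ V (Ioi (0:ℝ)) :=
      fun x hx => ((hVg x hx).differentiableAt).differentiableWithinAt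
    have hcont : ContinuousOn (deriv V) (Ioi (0:ℝ)) :=
      (hgcont.continuousOn).congr (fun x hx => hderiv x hx)
    have h : ContDiffOn ℝ ((0:ℕ) + 1) V (Ioi (0:ℝ)) :=
      (contDiffOn_succ_iff_deriv_of_isOpen isOpen_Ioi).mpr
        ⟨hdiff, by simp, by exact_mod_cast contDiffOn_zero.mpr hcont⟩
    exact_mod_cast h
  have hdd_lo : ∀ x, 0 < x → x < bh → deriv (deriv V) x = D1 * deriv (deriv ψ) x := by
    intro x hx hlt
    have hEq : deriv V =ᶠ[nhds x] fun y => D1 * deriv ψ y := by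
      filter_upwards [Ioo_mem_nhds hx hlt] with y hy
      rw [hderiv y hy.1]
      simp only [hg_def]
      rw [if_pos hy.2.le]
    rw [hEq.deriv_eq, deriv_const_mul _ (hψddiff x)]
  have hdd_hi : ∀ x, bh < x → deriv (deriv V) x = D4 * deriv (deriv W) x := by
    intro x hgt
    have hEq : deriv V =ᶠ[nhds x] fun y => D4 * deriv W y := by
      filter_upwards [isOpen_Ioi.eventually_mem (show x ∈ Ioi bh from hgt)] with y hy
      rw [hderiv y (hbh.trans hy)]
      simp only [hg_def]
      rw [if_neg (not_le.mpr hy)]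
    rw [hEq.deriv_eq, deriv_const_mul _ (hWddiff x)]
  have hψdanti : StrictAntiOn (deriv ψ) (Icc (0:ℝ) bstar) := by
    apply strictAntiOn_of_deriv_neg (convex_Icc _ _) (hψdcont.continuousOn)
    intro y hy
    rw [interior_Icc] at hy
    exact hconc y hy.1.le hy.2
  have hWdmono : StrictMonoOn (deriv W) (Ici (0:ℝ)) := by
    apply strictMonoOn_of_deriv_pos (convex_Ici _) (hWdcont.continuousOn)
    intro y hy
    rw [interior_Ici] at hy
    exact hφddpos A hA y (le_of_lt hy)
  have h1lo : ∀ x, 0 < x → x < bh → 1 ≤ D1 * deriv ψ x := by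
    intro x hx hlt
    have h := hψdanti (Set.mem_Icc.mpr ⟨hx.le, (hlt.trans_le hbhle).le⟩)
      (Set.mem_Icc.mpr ⟨hbh.le, hbhle⟩) hlt
    calc (1:ℝ) = D1 * deriv ψ bh := hD1p.symm
    _ ≤ D1 * deriv ψ x := mul_le_mul_of_nonneg_left h.le hD1pos.le
  have h1hi : ∀ x, bh < x → D4 * deriv W x ≤ 1 := by
    intro x hgt
    have h := hWdmono (Set.mem_Ici.mpr hbh.le) (Set.mem_Ici.mpr (hbh.trans hgt).le) hgt
    calc D4 * deriv W x ≤ D4 * deriv W bh := mul_le_mul_of_nonpos_left h.le hD4neg.le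
    _ = 1 := hD4q
  have hEQ : ∀ x, 0 < x → x ≠ bh →
      (1/2) * σ x ^ 2 * deriv (deriv V) x
        + (μ x - ((n : ℝ) - 1) * K * (if bh ≤ x then 1 else 0)
            - K * (if bh ≤ x then 1 else 0)) * deriv V x
        - r * V x + K * (if bh ≤ x then 1 else 0) = 0 := by
    intro x hx hne
    rcases hne.lt_or_gt with hlt | hgt
    · rw [if_neg (not_le.mpr hlt), hdd_lo x hx hlt, hderiv x hx, hVlo x hx.le hlt.le]
      simp only [hg_def]
      rw [if_pos hlt.le]
      have hODE := hψODE x hx.le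
      linear_combination D1 * hODE
    · rw [if_pos hgt.le, hdd_hi x hgt, hderiv x hx, hVhi x hgt.le]
      simp only [hg_def]
      rw [if_neg (not_le.mpr hgt)]
      have hODE := hφODE A hA x (hbh.trans hgt).le
      have hrK : r * (K / r) = K := by field_simp
      linear_combination D4 * hODE - hrK
  refine ⟨hC1, hdVb, ?_, hEQ⟩
  intro x hx hne l hl
  have heq := hEQ x hx hne
  rcases hne.lt_or_gt with hlt | hgt
  · rw [if_neg (not_le.mpr hlt)] at heq ⊢
    have h1 : 1 ≤ deriv V x := by
      rw [hderiv x hx]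
      simp only [hg_def]
      rw [if_pos hlt.le]
      exact h1lo x hx hlt
    have key : l * 1 ≤ l * deriv V x := mul_le_mul_of_nonneg_left h1 hl.1
    linarith [heq, key]
  · rw [if_pos hgt.le] at heq ⊢
    have h1 : deriv V x ≤ 1 := by
      rw [hderiv x hx]
      simp only [hg_def]
      rw [if_neg (not_le.mpr hgt)]
      exact h1hi x hgt
    have key : (K - l) * deriv V x ≤ (K - l) * 1 :=
      mul_le_mul_of_nonneg_left h1 (by linarith [hl.2])
    linarith [heq, key]
end

section
/- Fix K > 0. For each integer n ≥ 1 define f_n(b) := ψ(b)/ψ'(b) − φ_{nK}(b)/φ_{nK}'(b) for b ≥ 0, and define the equilibrium threshold b̂(n) as follows: if φ_{nK}'(0) < −r/K then b̂(n) is the unique positive solution of f_n(b) = K/r, and otherwise b̂(n) := 0. Then the sequence n ↦ b̂(n) is nonincreasing, and there exists an integer n̄ such that b̂(n) > 0 for all n < n̄ and b̂(n) = 0 for all n ≥ n̄. -/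
open Set Filter Topology

/-!
Write `L_A f = ½σ²f'' + (μ - A)f' - rf`, so that `L_A φ_A = 0`. On `[0, ∞)` we have `ψ' > 0` and
`φ_A' < 0`: a zero of the derivative would be an extremum of it, which the ODE excludes.

For `A₁ ≤ A₂` and `x₀ ≥ 0` the function `z = φ_{A₁}(x₀) φ_{A₂} - φ_{A₂}(x₀) φ_{A₁}` satisfies
`L_{A₁} z = φ_{A₁}(x₀) (A₂ - A₁) φ_{A₂}' ≤ 0`, vanishes at `x₀` and at infinity, hence is
nonnegative on `[x₀, ∞)` by the minimum principle, and so `z'(x₀) ≥ 0`. Thus `φ_A / φ_A'` is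
antitone in `A`: `f_n` increases pointwise with `n`, and so does `φ_{nK}'(0)`. Hence if
`φ_{nK}'(0) < -r/K` and `m ≤ n`, then also `φ_{mK}'(0) < -r/K`, and
`f_n(0) < K/r = f_m(b̂(m)) ≤ f_n(b̂(m))`; the intermediate value theorem and uniqueness of the root
give `b̂(n) ≤ b̂(m)`.

For large `n` the condition `φ_{nK}'(0) < -r/K` fails: otherwise `g(x) = φ_{nK}(x) + (r/K) x`
would attain its minimum over `[0, K/r]` at an interior point (since `g'(0) < 0` and
`g(K/r) > 1 = g(0)`), where `φ_{nK}' = -r/K` and `φ_{nK}'' ≥ 0`, which the ODE excludes as soon as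
`nK > K + μ` on `[0, K/r]`.
-/

section Calculus

variable {f : ℝ → ℝ} {a : ℝ}

theorem deriv_nonneg_of_eventually_le_right (hf : DifferentiableAt ℝ f a)
    (h : ∀ᶠ t in 𝓝[>] a, f a ≤ f t) : 0 ≤ deriv f a := by
  refine ge_of_tendsto ((hasDerivAt_iff_tendsto_slope.1 hf.hasDerivAt).mono_left
    (nhdsGT_le_nhdsNE a)) ?_
  filter_upwards [h, self_mem_nhdsWithin] with t hft (hat : a < t)
  rw [slope_def_field]
  exact div_nonneg (sub_nonneg.2 hft) (sub_nonneg.2 hat.le)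

theorem deriv_nonpos_of_eventually_le_right (hf : DifferentiableAt ℝ f a)
    (h : ∀ᶠ t in 𝓝[>] a, f t ≤ f a) : deriv f a ≤ 0 := by
  have := deriv_nonneg_of_eventually_le_right hf.neg (h.mono fun _ ht => neg_le_neg ht)
  rwa [deriv.neg, neg_nonneg] at this

theorem IsLocalMin.deriv_deriv_nonneg (hf : ContinuousAt f a) (h : IsLocalMin f a) :
    0 ≤ deriv (deriv f) a := by
  by_contra! hneg
  -- `a` would also be a local maximum, so `f` would be locally constant
  have hmax := isLocalMax_of_deriv_deriv_neg hneg h.deriv_eq_zero hf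
  have hconst : f =ᶠ[𝓝 a] fun _ => f a := (h.and hmax).mono fun _ hx => le_antisymm hx.2 hx.1
  have := hconst.deriv.deriv_eq
  simp only [deriv_const'] at this
  exact hneg.ne this

end Calculus

section SecondOrderODE

variable {r : ℝ} {a b f : ℝ → ℝ}

theorem deriv_pos_of_ode_of_monotoneOn (hr : 0 < r) (hf : Differentiable ℝ f)
    (hf'0 : 0 < deriv f 0) (hpos : ∀ x > 0, 0 < f x) (hmono : MonotoneOn f (Ici 0))
    (hode : ∀ x > 0, a x * deriv (deriv f) x + b x * deriv f x - r * f x = 0) :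
    ∀ x ≥ 0, 0 < deriv f x := by
  have hnonneg : ∀ x ≥ 0, 0 ≤ deriv f x := fun x hx =>
    deriv_nonneg_of_eventually_le_right (hf x)
      (eventually_nhdsWithin_of_forall fun t (ht : x < t) => hmono hx (hx.trans ht.le) ht.le)
  intro x hx
  rcases hx.eq_or_lt with rfl | hx
  · exact hf'0
  refine (hnonneg x hx.le).lt_of_ne' fun hzero => ?_
  have hmin : IsLocalMin (deriv f) x := by
    filter_upwards [Ioi_mem_nhds hx] with t ht
    exact hzero ▸ hnonneg t (le_of_lt ht)
  have := hode x hx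
  rw [hmin.deriv_eq_zero, hzero] at this
  nlinarith [hpos x hx]

theorem deriv_neg_of_ode_of_antitoneOn (hr : 0 < r) (hf : ContDiff ℝ 2 f)
    (ha : ∀ x ≥ 0, 0 ≤ a x) (hpos : ∀ x ≥ 0, 0 < f x) (hanti : AntitoneOn f (Ici 0))
    (hode : ∀ x ≥ 0, a x * deriv (deriv f) x + b x * deriv f x - r * f x = 0) :
    ∀ x ≥ 0, deriv f x < 0 := by
  have hnonpos : ∀ x ≥ 0, deriv f x ≤ 0 := fun x hx =>
    deriv_nonpos_of_eventually_le_right (hf.differentiable two_ne_zero x)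
      (eventually_nhdsWithin_of_forall fun t (ht : x < t) => hanti hx (hx.trans ht.le) ht.le)
  intro x hx
  refine (hnonpos x hx).lt_of_ne fun hzero => ?_
  have hf'' : deriv (deriv f) x ≤ 0 :=
    deriv_nonpos_of_eventually_le_right (hf.differentiable_deriv_two x)
      (eventually_nhdsWithin_of_forall fun t (ht : x < t) => hzero ▸ hnonpos t (hx.trans ht.le))
  have := hode x hx
  rw [hzero] at this
  nlinarith [hpos x hx, mul_nonpos_of_nonneg_of_nonpos (ha x hx) hf'']

theorem nonneg_of_ode_le_zero (hr : 0 < r) {x₀ : ℝ} (hf : ContDiff ℝ 2 f)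
    (ha : ∀ x ≥ x₀, 0 ≤ a x)
    (hode : ∀ x ≥ x₀, a x * deriv (deriv f) x + b x * deriv f x - r * f x ≤ 0)
    (hf₀ : 0 ≤ f x₀) (hlim : Tendsto f atTop (𝓝 0)) :
    ∀ x ≥ x₀, 0 ≤ f x := by
  by_contra! ⟨y, hy, hfy⟩
  obtain ⟨R, hfR, hyR⟩ :=
    ((hlim.eventually (lt_mem_nhds hfy)).and (eventually_ge_atTop y)).exists
  obtain ⟨s, hs, hmin⟩ := isCompact_Icc.exists_isMinOn (nonempty_Icc.2 (hy.trans hyR))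
    hf.continuous.continuousOn
  have hsy : f s ≤ f y := isMinOn_iff.1 hmin y ⟨hy, hyR⟩
  have hs₀ : x₀ < s := hs.1.lt_of_ne (by rintro rfl; linarith)
  have hsR : s < R := hs.2.lt_of_ne (by rintro rfl; linarith)
  have hloc : IsLocalMin f s := hmin.isLocalMin (Icc_mem_nhds hs₀ hsR)
  have := hode s hs.1
  rw [hloc.deriv_eq_zero] at this
  nlinarith [mul_nonneg (ha s hs.1) (hloc.deriv_deriv_nonneg hf.continuous.continuousAt)]

theorem mul_deriv_le_of_ode_of_le (hr : 0 < r) {A₁ A₂ : ℝ} (hA : A₁ ≤ A₂) {u v : ℝ → ℝ}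
    (ha : ∀ x ≥ 0, 0 ≤ a x) (hu : ContDiff ℝ 2 u) (hv : ContDiff ℝ 2 v)
    (hv' : ∀ x ≥ 0, deriv v x ≤ 0)
    (hulim : Tendsto u atTop (𝓝 0)) (hvlim : Tendsto v atTop (𝓝 0))
    (huode : ∀ x ≥ 0, a x * deriv (deriv u) x + (b x - A₁) * deriv u x - r * u x = 0)
    (hvode : ∀ x ≥ 0, a x * deriv (deriv v) x + (b x - A₂) * deriv v x - r * v x = 0)
    {x₀ : ℝ} (hx₀ : 0 ≤ x₀) (hux₀ : 0 ≤ u x₀) :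
    v x₀ * deriv u x₀ ≤ u x₀ * deriv v x₀ := by
  set z : ℝ → ℝ := fun t => u x₀ * v t - v x₀ * u t
  have hz : ContDiff ℝ 2 z := (contDiff_const.mul hv).sub (contDiff_const.mul hu)
  have hz' : deriv z = fun t => u x₀ * deriv v t - v x₀ * deriv u t := funext fun t =>
    (((hv.differentiable two_ne_zero t).hasDerivAt.const_mul _).sub
      ((hu.differentiable two_ne_zero t).hasDerivAt.const_mul _)).deriv
  have hz'' : deriv (deriv z) = fun t => u x₀ * deriv (deriv v) t - v x₀ * deriv (deriv u) t := by
    rw [hz']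
    exact funext fun t => (((hv.differentiable_deriv_two t).hasDerivAt.const_mul _).sub
      ((hu.differentiable_deriv_two t).hasDerivAt.const_mul _)).deriv
  have hz₀ : z x₀ = 0 := by simp only [z]; ring
  have hzlim : Tendsto z atTop (𝓝 0) := by
    simpa using (hvlim.const_mul (u x₀)).sub (hulim.const_mul (v x₀))
  have hsuper : ∀ x ≥ x₀, a x * deriv (deriv z) x + (b x - A₁) * deriv z x - r * z x ≤ 0 := by
    intro x hx
    have hx0 : 0 ≤ x := hx₀.trans hx
    have hLz : a x * deriv (deriv z) x + (b x - A₁) * deriv z x - r * z x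
        = u x₀ * (A₂ - A₁) * deriv v x := by
      rw [hz'', hz']
      linear_combination u x₀ * hvode x hx0 - v x₀ * huode x hx0
    rw [hLz]
    exact mul_nonpos_of_nonneg_of_nonpos (mul_nonneg hux₀ (sub_nonneg.2 hA)) (hv' x hx0)
  have hznonneg := nonneg_of_ode_le_zero hr hz (fun x hx => ha x (hx₀.trans hx)) hsuper
    hz₀.ge hzlim
  have hz'x₀ := deriv_nonneg_of_eventually_le_right (hz.differentiable two_ne_zero x₀)
    (eventually_nhdsWithin_of_forall fun t (ht : x₀ < t) => hz₀ ▸ hznonneg t ht.le)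
  rw [hz'] at hz'x₀
  linarith

theorem div_deriv_le_of_ode_of_le (hr : 0 < r) {A₁ A₂ : ℝ} (hA : A₁ ≤ A₂) {u v : ℝ → ℝ}
    (ha : ∀ x ≥ 0, 0 ≤ a x) (hu : ContDiff ℝ 2 u) (hv : ContDiff ℝ 2 v)
    (hu' : ∀ x ≥ 0, deriv u x < 0) (hv' : ∀ x ≥ 0, deriv v x < 0)
    (hulim : Tendsto u atTop (𝓝 0)) (hvlim : Tendsto v atTop (𝓝 0))
    (huode : ∀ x ≥ 0, a x * deriv (deriv u) x + (b x - A₁) * deriv u x - r * u x = 0)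
    (hvode : ∀ x ≥ 0, a x * deriv (deriv v) x + (b x - A₂) * deriv v x - r * v x = 0)
    {x₀ : ℝ} (hx₀ : 0 ≤ x₀) (hux₀ : 0 ≤ u x₀) :
    v x₀ / deriv v x₀ ≤ u x₀ / deriv u x₀ := by
  rw [← neg_div_neg_eq, ← neg_div_neg_eq (u x₀),
    div_le_div_iff₀ (neg_pos.2 (hv' x₀ hx₀)) (neg_pos.2 (hu' x₀ hx₀))]
  linarith [mul_deriv_le_of_ode_of_le hr hA ha hu hv (fun x hx => (hv' x hx).le) hulim hvlim
    huode hvode hx₀ hux₀]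

theorem neg_div_le_deriv_zero_of_lt_drift (hr : 0 < r) {K A : ℝ} (hK : 0 < K)
    (ha : ∀ x ≥ 0, 0 ≤ a x) (hf : ContDiff ℝ 2 f) (hf0 : f 0 = 1) (hpos : ∀ x ≥ 0, 0 < f x)
    (hanti : AntitoneOn f (Ici 0))
    (hode : ∀ x ≥ 0, a x * deriv (deriv f) x + (b x - A) * deriv f x - r * f x = 0)
    (hA : ∀ x ∈ Icc 0 (K / r), b x + K < A) :
    -(r / K) ≤ deriv f 0 := by
  by_contra! hf'0
  have hT : 0 < K / r := div_pos hK hr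
  set g : ℝ → ℝ := fun t => f t + r / K * t
  have hg : Differentiable ℝ g :=
    (hf.differentiable two_ne_zero).add ((differentiable_id).const_mul _)
  have hg' : deriv g = fun t => deriv f t + r / K := funext fun t =>
    ((hf.differentiable two_ne_zero t).hasDerivAt.fun_add
      (((hasDerivAt_id t).const_mul (r / K)).congr_deriv (mul_one _))).deriv
  obtain ⟨s, hs, hmin⟩ :=
    isCompact_Icc.exists_isMinOn (nonempty_Icc.2 hT.le) hg.continuous.continuousOn
  have hs0 : 0 < s := by
    refine hs.1.lt_of_ne ?_
    rintro rfl
    have := deriv_nonneg_of_eventually_le_right (hg 0) (by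
      filter_upwards [Icc_mem_nhdsGT hT] with t ht using isMinOn_iff.1 hmin t ht)
    rw [hg'] at this
    linarith
  have hsT : s < K / r := by
    refine hs.2.lt_of_ne ?_
    rintro rfl
    have h0 := isMinOn_iff.1 hmin 0 (left_mem_Icc.2 hT.le)
    have : r / K * (K / r) = 1 := by field_simp
    simp only [g, hf0, mul_zero, add_zero, this] at h0
    linarith [hpos (K / r) hT.le]
  have hloc : IsLocalMin g s := hmin.isLocalMin (Icc_mem_nhds hs0 hsT)
  have hf's : deriv f s = -(r / K) := by
    have := hloc.deriv_eq_zero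
    rw [hg'] at this
    linarith
  have hf''s : 0 ≤ deriv (deriv f) s := by
    have := hloc.deriv_deriv_nonneg hg.continuous.continuousAt
    rwa [hg', deriv_add_const] at this
  have hfs : f s ≤ 1 := hf0 ▸ hanti self_mem_Ici hs.1 hs.1
  have hdrift : (b s - A) * (r / K) < -r := by
    calc (b s - A) * (r / K) < -K * (r / K) :=
          mul_lt_mul_of_pos_right (by linarith [hA s hs]) (div_pos hr hK)
      _ = -r := by field_simp
  have := hode s hs.1
  rw [hf's] at this
  nlinarith [mul_nonneg (ha s hs.1) hf''s]

end SecondOrderODE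

theorem IsCompact.exists_nat_forall_add_lt_mul {s : Set ℝ} (hs : IsCompact s) {f : ℝ → ℝ}
    (hf : ContinuousOn f s) (c : ℝ) {K : ℝ} (hK : 0 < K) :
    ∃ n : ℕ, 1 ≤ n ∧ ∀ x ∈ s, f x + c < n * K := by
  obtain ⟨M, hM⟩ := hs.bddAbove_image hf
  obtain ⟨n, hn⟩ := exists_nat_gt ((M + c) / K)
  rw [div_lt_iff₀ hK] at hn
  refine ⟨n + 1, by omega, fun x hx => ?_⟩
  have := hM (mem_image_of_mem f hx)
  push_cast
  nlinarith

theorem le_of_forall_root_eq {F : ℝ → ℝ} {c β γ : ℝ} (hβ : 0 ≤ β)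
    (hF : ContinuousOn F (Icc 0 β)) (hF0 : F 0 < c) (hFβ : c ≤ F β)
    (huniq : ∀ b, 0 < b → F b = c → b = γ) : γ ≤ β := by
  obtain ⟨b, hb, hFb⟩ := intermediate_value_Icc hβ hF ⟨hF0.le, hFβ⟩
  have hb0 : 0 < b := hb.1.lt_of_ne (by rintro rfl; exact hF0.ne hFb)
  exact huniq b hb0 hFb ▸ hb.2

def IsRootOrZero (F : ℕ → ℝ → ℝ) (P : ℕ → Prop) (c : ℝ) (bhat : ℕ → ℝ) : Prop :=
  ∀ n, 1 ≤ n →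
    (P n → 0 < bhat n ∧ F n (bhat n) = c ∧ ∀ b, 0 < b → F n b = c → b = bhat n) ∧
    (¬ P n → bhat n = 0)

namespace IsRootOrZero

variable {F : ℕ → ℝ → ℝ} {P : ℕ → Prop} {c : ℝ} {bhat : ℕ → ℝ}

theorem nonneg (h : IsRootOrZero F P c bhat) {n : ℕ} (hn : 1 ≤ n) : 0 ≤ bhat n := by
  by_cases hP : P n
  · exact ((h n hn).1 hP).1.le
  · exact ((h n hn).2 hP).ge

theorem antitone (h : IsRootOrZero F P c bhat) (hF : ∀ n, ContinuousOn (F n) (Ici 0))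
    (hFmono : ∀ m n, m ≤ n → ∀ x ≥ 0, F m x ≤ F n x) (hP : ∀ m n, m ≤ n → P n → P m)
    (hF0 : ∀ n, P n → F n 0 < c) :
    ∀ m n, 1 ≤ m → m ≤ n → bhat n ≤ bhat m := by
  intro m n hm hmn
  by_cases hPn : P n
  · obtain ⟨-, hFn, huniq⟩ := (h n (hm.trans hmn)).1 hPn
    obtain ⟨hbm, hFm, -⟩ := (h m hm).1 (hP m n hmn hPn)
    exact le_of_forall_root_eq hbm.le ((hF n).mono Icc_subset_Ici_self) (hF0 n hPn)
      (hFm ▸ hFmono m n hmn _ hbm.le) huniq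
  · rw [(h n (hm.trans hmn)).2 hPn]
    exact h.nonneg hm

end IsRootOrZero

theorem exists_threshold_of_antitone {b : ℕ → ℝ}
    (hanti : ∀ m n, 1 ≤ m → m ≤ n → b n ≤ b m) (hnonneg : ∀ n, 1 ≤ n → 0 ≤ b n)
    (hzero : ∃ n, 1 ≤ n ∧ b n = 0) :
    ∃ nbar : ℕ, ∀ n, 1 ≤ n → (n < nbar → 0 < b n) ∧ (nbar ≤ n → b n = 0) := by
  classical
  refine ⟨Nat.find hzero, fun n hn => ⟨fun hlt => ?_, fun hle => ?_⟩⟩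
  · exact (hnonneg n hn).lt_of_ne' fun h => Nat.find_min hzero hlt ⟨hn, h⟩
  · obtain ⟨hfind, hbfind⟩ := Nat.find_spec hzero
    exact le_antisymm (hbfind ▸ hanti _ n hfind hle) (hnonneg n hn)

theorem stmt_1_general
    (r : ℝ) (hr : 0 < r)
    (μ σ : ℝ → ℝ) (hμ : ContDiff ℝ 1 μ)
    (ψ : ℝ → ℝ) (hψC : ContDiff ℝ 3 ψ)
    (hψ0 : ψ 0 = 0) (hψd0 : deriv ψ 0 = 1)
    (hψpos : ∀ x > (0:ℝ), 0 < ψ x)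
    (hψmono : MonotoneOn ψ (Ici (0:ℝ)))
    (hψODE : ∀ x ≥ (0:ℝ),
      (1/2) * σ x ^ 2 * deriv (deriv ψ) x + μ x * deriv ψ x - r * ψ x = 0)
    (φ : ℝ → ℝ → ℝ)
    (hφC : ∀ A ≥ (0:ℝ), ContDiff ℝ 2 (φ A))
    (hφ0 : ∀ A ≥ (0:ℝ), φ A 0 = 1)
    (hφpos : ∀ A ≥ (0:ℝ), ∀ x ≥ (0:ℝ), 0 < φ A x)
    (hφanti : ∀ A ≥ (0:ℝ), AntitoneOn (φ A) (Ici (0:ℝ)))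
    (hφlim : ∀ A ≥ (0:ℝ), Tendsto (φ A) atTop (nhds 0))
    (hφODE : ∀ A ≥ (0:ℝ), ∀ x ≥ (0:ℝ),
      (1/2) * σ x ^ 2 * deriv (deriv (φ A)) x + (μ x - A) * deriv (φ A) x - r * φ A x = 0)
    (K : ℝ) (hK : 0 < K)
    (bhat : ℕ → ℝ)
    (hbhat : ∀ n : ℕ, 1 ≤ n →
      (deriv (φ ((n : ℝ) * K)) 0 < -(r / K) →
        0 < bhat n ∧
        ψ (bhat n) / deriv ψ (bhat n)
          - φ ((n : ℝ) * K) (bhat n) / deriv (φ ((n : ℝ) * K)) (bhat n) = K / r ∧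
        (∀ b' : ℝ, 0 < b' →
          ψ b' / deriv ψ b'
            - φ ((n : ℝ) * K) b' / deriv (φ ((n : ℝ) * K)) b' = K / r → b' = bhat n)) ∧
      (¬ deriv (φ ((n : ℝ) * K)) 0 < -(r / K) → bhat n = 0)) :
    (∀ m n : ℕ, 1 ≤ m → m ≤ n → bhat n ≤ bhat m) ∧
    ∃ nbar : ℕ, ∀ n : ℕ, 1 ≤ n →
      (n < nbar → 0 < bhat n) ∧ (nbar ≤ n → bhat n = 0) := by
  have hA (n : ℕ) : (0 : ℝ) ≤ n * K := by positivity
  have hψ' : ∀ x ≥ 0, 0 < deriv ψ x :=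
    deriv_pos_of_ode_of_monotoneOn hr (hψC.differentiable (by norm_num)) (hψd0 ▸ one_pos) hψpos
      hψmono fun x hx => hψODE x hx.le
  have hφ' (n : ℕ) : ∀ x ≥ 0, deriv (φ (n * K)) x < 0 :=
    deriv_neg_of_ode_of_antitoneOn hr (hφC _ (hA n)) (fun _ _ => by positivity)
      (hφpos _ (hA n)) (hφanti _ (hA n)) (hφODE _ (hA n))
  have hratio {m n : ℕ} (hmn : m ≤ n) {x : ℝ} (hx : 0 ≤ x) :
      φ (n * K) x / deriv (φ (n * K)) x ≤ φ (m * K) x / deriv (φ (m * K)) x :=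
    div_deriv_le_of_ode_of_le hr (by gcongr) (fun _ _ => by positivity) (hφC _ (hA m))
      (hφC _ (hA n)) (hφ' m) (hφ' n) (hφlim _ (hA m)) (hφlim _ (hA n)) (hφODE _ (hA m))
      (hφODE _ (hA n)) hx (hφpos _ (hA m) x hx).le
  have hcont (n : ℕ) : ContinuousOn
      (fun b => ψ b / deriv ψ b - φ (n * K) b / deriv (φ (n * K)) b) (Ici 0) :=
    (hψC.continuous.continuousOn.div (hψC.continuous_deriv (by norm_num)).continuousOn
      fun x hx => (hψ' x hx).ne').sub ((hφC _ (hA n)).continuous.continuousOn.div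
      ((hφC _ (hA n)).continuous_deriv (by norm_num)).continuousOn fun x hx => (hφ' n x hx).ne)
  have hstart (n : ℕ) (hn : deriv (φ (n * K)) 0 < -(r / K)) :
      ψ 0 / deriv ψ 0 - φ (n * K) 0 / deriv (φ (n * K)) 0 < K / r := by
    have h := one_div_lt_one_div_of_lt (div_pos hr hK) (lt_neg_of_lt_neg hn)
    rw [one_div_div, one_div_neg_eq_neg_one_div] at h
    simpa [hψ0, hφ0 _ (hA n)] using h
  have hslope {m n : ℕ} (hmn : m ≤ n) : deriv (φ (m * K)) 0 ≤ deriv (φ (n * K)) 0 := by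
    have h := hratio hmn le_rfl
    rw [hφ0 _ (hA m), hφ0 _ (hA n)] at h
    exact (one_div_le_one_div_of_neg (hφ' n 0 le_rfl) (hφ' m 0 le_rfl)).1 h
  have hsel : IsRootOrZero (fun n b => ψ b / deriv ψ b - φ (n * K) b / deriv (φ (n * K)) b)
      (fun n => deriv (φ (n * K)) 0 < -(r / K)) (K / r) bhat := hbhat
  have hanti := hsel.antitone hcont (fun m n hmn x hx => sub_le_sub_left (hratio hmn hx) _)
    (fun m n hmn hn => (hslope hmn).trans_lt hn) hstart
  refine ⟨hanti, exists_threshold_of_antitone hanti (fun _ => hsel.nonneg) ?_⟩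
  obtain ⟨n, hn, hnK⟩ := (isCompact_Icc (a := (0 : ℝ)) (b := K / r)).exists_nat_forall_add_lt_mul
    hμ.continuous.continuousOn K hK
  exact ⟨n, hn, (hbhat n hn).2 (not_lt.2 (neg_div_le_deriv_zero_of_lt_drift hr hK
    (fun _ _ => by positivity) (hφC _ (hA n)) (hφ0 _ (hA n)) (hφpos _ (hA n)) (hφanti _ (hA n))
    (hφODE _ (hA n)) hnK))⟩

/-- with fixed individual maximal extraction rate K, the equilibrium
threshold b̂(n) (the unique positive solution of f_n(b) = K/r when φ_{nK}'(0) < −r/K,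
and 0 otherwise) is nonincreasing in the number n of agents, and there is n̄ such
that b̂(n) > 0 for n < n̄ and b̂(n) = 0 for n ≥ n̄. -/
theorem stmt_1
    (r c : ℝ) (hr : 0 < r) (hc : 0 < c)
    (μ σ : ℝ → ℝ) (hμ : ContDiff ℝ 1 μ) (hσ : ContDiff ℝ 1 σ)
    (hσpos : ∀ x ≥ (0:ℝ), 0 < σ x ^ 2)
    (hμderiv : ∀ x ≥ (0:ℝ), deriv μ x < r)
    (hμ0 : 0 < μ 0)
    (hμc : ∀ x ≥ c, μ x ≤ r * x - 1 / c)
    (ψ : ℝ → ℝ) (hψC : ContDiff ℝ 3 ψ)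
    (hψ0 : ψ 0 = 0) (hψd0 : deriv ψ 0 = 1)
    (hψpos : ∀ x > (0:ℝ), 0 < ψ x)
    (hψmono : MonotoneOn ψ (Ici (0:ℝ)))
    (hψODE : ∀ x ≥ (0:ℝ),
      (1/2) * σ x ^ 2 * deriv (deriv ψ) x + μ x * deriv ψ x - r * ψ x = 0)
    (φ : ℝ → ℝ → ℝ)
    (hφC : ∀ A ≥ (0:ℝ), ContDiff ℝ 2 (φ A))
    (hφ0 : ∀ A ≥ (0:ℝ), φ A 0 = 1)
    (hφpos : ∀ A ≥ (0:ℝ), ∀ x ≥ (0:ℝ), 0 < φ A x)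
    (hφanti : ∀ A ≥ (0:ℝ), AntitoneOn (φ A) (Ici (0:ℝ)))
    (hφlim : ∀ A ≥ (0:ℝ), Tendsto (φ A) atTop (nhds 0))
    (hφODE : ∀ A ≥ (0:ℝ), ∀ x ≥ (0:ℝ),
      (1/2) * σ x ^ 2 * deriv (deriv (φ A)) x + (μ x - A) * deriv (φ A) x - r * φ A x = 0)
    (K : ℝ) (hK : 0 < K)
    (bhat : ℕ → ℝ)
    (hbhat : ∀ n : ℕ, 1 ≤ n →
      (deriv (φ ((n : ℝ) * K)) 0 < -(r / K) →
        0 < bhat n ∧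
        ψ (bhat n) / deriv ψ (bhat n)
          - φ ((n : ℝ) * K) (bhat n) / deriv (φ ((n : ℝ) * K)) (bhat n) = K / r ∧
        (∀ b' : ℝ, 0 < b' →
          ψ b' / deriv ψ b'
            - φ ((n : ℝ) * K) b' / deriv (φ ((n : ℝ) * K)) b' = K / r → b' = bhat n)) ∧
      (¬ deriv (φ ((n : ℝ) * K)) 0 < -(r / K) → bhat n = 0)) :
    (∀ m n : ℕ, 1 ≤ m → m ≤ n → bhat n ≤ bhat m) ∧
    ∃ nbar : ℕ, ∀ n : ℕ, 1 ≤ n →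
      (n < nbar → 0 < bhat n) ∧ (nbar ≤ n → bhat n = 0) :=
  stmt_1_general r hr μ σ hμ ψ hψC hψ0 hψd0 hψpos hψmono hψODE φ hφC hφ0 hφpos hφanti hφlim hφODE K
    hK bhat hbhat
end

section
/- Fix a total maximal extraction rate K̄ > 0 and set f(b) := ψ(b)/ψ'(b) − φ_{K̄}(b)/φ_{K̄}'(b) for b ≥ 0 (note f does not depend on n). For each integer n ≥ 1 define b̂(n) as the unique positive solution of f(b) = K̄/(n·r) if φ_{K̄}'(0) < −n·r/K̄, and b̂(n) := 0 otherwise. Then the sequence n ↦ b̂(n) is nonincreasing. -/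
/-!
If `b̂(n) > b̂(m)` for some `m ≤ n`, then `f(0) = -1/φ'(0) < K̄/(n r) ≤ K̄/(m r) = f(b̂(m))`, so
the intermediate value theorem produces a positive solution of `f(b) = K̄/(n r)` in `(0, b̂(m)]`,
contradicting uniqueness. Continuity of `f` on `[0, ∞)` needs `ψ'` and `φ'` to have no zeros
there: at a positive zero of `ψ'` (resp. `φ'`) monotonicity makes it a local extremum of `ψ'`
(resp. `φ'`), so the second derivative vanishes too and the ODE forces `r ψ = 0` (resp. `r φ = 0`).
-/

open Set Filter Topology

lemma MonotoneOn.isLocalMin_deriv {g : ℝ → ℝ} {s : Set ℝ} {x : ℝ} (hg : MonotoneOn g s)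
    (hs : s ∈ 𝓝 x) (hx : deriv g x = 0) : IsLocalMin (deriv g) x := by
  filter_upwards [interior_mem_nhds.2 hs] with y hy
  rw [hx, ← derivWithin_of_mem_nhds (mem_interior_iff_mem_nhds.1 hy)]
  exact hg.derivWithin_nonneg

lemma AntitoneOn.isLocalMax_deriv {g : ℝ → ℝ} {s : Set ℝ} {x : ℝ} (hg : AntitoneOn g s)
    (hs : s ∈ 𝓝 x) (hx : deriv g x = 0) : IsLocalMax (deriv g) x := by
  filter_upwards [interior_mem_nhds.2 hs] with y hy
  rw [hx, ← derivWithin_of_mem_nhds (mem_interior_iff_mem_nhds.1 hy)]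
  exact hg.derivWithin_nonpos

lemma deriv_ne_zero_of_isLocalExtr_deriv {g : ℝ → ℝ} {p q r x : ℝ}
    (hode : p * deriv (deriv g) x + q * deriv g x - r * g x = 0) (hr : r ≠ 0) (hgx : g x ≠ 0)
    (hext : IsLocalExtr (deriv g) x) : deriv g x ≠ 0 := by
  intro h
  rw [hext.deriv_eq_zero, h] at hode
  exact mul_ne_zero hr hgx (by linarith)

lemma MonotoneOn.deriv_ne_zero_of_ode {g : ℝ → ℝ} {s : Set ℝ} {p q r x : ℝ}
    (hg : MonotoneOn g s) (hs : s ∈ 𝓝 x)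
    (hode : p * deriv (deriv g) x + q * deriv g x - r * g x = 0) (hr : r ≠ 0) (hgx : g x ≠ 0) :
    deriv g x ≠ 0 :=
  fun h ↦ deriv_ne_zero_of_isLocalExtr_deriv hode hr hgx (hg.isLocalMin_deriv hs h).isExtr h

lemma AntitoneOn.deriv_ne_zero_of_ode {g : ℝ → ℝ} {s : Set ℝ} {p q r x : ℝ}
    (hg : AntitoneOn g s) (hs : s ∈ 𝓝 x)
    (hode : p * deriv (deriv g) x + q * deriv g x - r * g x = 0) (hr : r ≠ 0) (hgx : g x ≠ 0) :
    deriv g x ≠ 0 :=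
  fun h ↦ deriv_ne_zero_of_isLocalExtr_deriv hode hr hgx (hg.isLocalMax_deriv hs h).isExtr h

lemma continuousOn_div_deriv {g : ℝ → ℝ} {s : Set ℝ} (hg : ContDiff ℝ 1 g)
    (hg' : ∀ x ∈ s, deriv g x ≠ 0) : ContinuousOn (fun x ↦ g x / deriv g x) s :=
  hg.continuous.continuousOn.div (hg.continuous_deriv le_rfl).continuousOn hg'

lemma le_of_unique_pos_preimage {f : ℝ → ℝ} {b b₁ y : ℝ} (hf : ContinuousOn f (Icc 0 b)) (hb : 0 ≤ b)
    (hf0 : f 0 < y) (hfb : y ≤ f b) (huniq : ∀ x, 0 < x → f x = y → x = b₁) : b₁ ≤ b := by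
  obtain ⟨x, ⟨hx0, hxb⟩, hfx⟩ := intermediate_value_Icc hb hf ⟨hf0.le, hfb⟩
  have hx : 0 < x := hx0.lt_of_ne (by rintro rfl; exact hf0.ne hfx)
  exact huniq x hx hfx ▸ hxb

theorem stmt_3_general
    (r : ℝ) (hr : 0 < r)
    (μ σ : ℝ → ℝ)
    (ψ : ℝ → ℝ) (hψC : ContDiff ℝ 3 ψ)
    (hψ0 : ψ 0 = 0) (hψd0 : deriv ψ 0 = 1)
    (hψpos : ∀ x > (0:ℝ), 0 < ψ x)
    (hψmono : MonotoneOn ψ (Ici (0:ℝ)))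
    (hψODE : ∀ x ≥ (0:ℝ),
      (1/2) * σ x ^ 2 * deriv (deriv ψ) x + μ x * deriv ψ x - r * ψ x = 0)
    (φ : ℝ → ℝ → ℝ)
    (hφC : ∀ A ≥ (0:ℝ), ContDiff ℝ 2 (φ A))
    (hφ0 : ∀ A ≥ (0:ℝ), φ A 0 = 1)
    (hφpos : ∀ A ≥ (0:ℝ), ∀ x ≥ (0:ℝ), 0 < φ A x)
    (hφanti : ∀ A ≥ (0:ℝ), AntitoneOn (φ A) (Ici (0:ℝ)))
    (hφODE : ∀ A ≥ (0:ℝ), ∀ x ≥ (0:ℝ),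
      (1/2) * σ x ^ 2 * deriv (deriv (φ A)) x + (μ x - A) * deriv (φ A) x - r * φ A x = 0)
    (Kbar : ℝ) (hKbar : 0 < Kbar)
    (f : ℝ → ℝ)
    (hf : ∀ b, f b = ψ b / deriv ψ b - φ Kbar b / deriv (φ Kbar) b)
    (bhat : ℕ → ℝ)
    (hbhat : ∀ n : ℕ, 1 ≤ n →
      (deriv (φ Kbar) 0 < -((n : ℝ) * r / Kbar) →
        0 < bhat n ∧ f (bhat n) = Kbar / ((n : ℝ) * r) ∧
        (∀ b' : ℝ, 0 < b' → f b' = Kbar / ((n : ℝ) * r) → b' = bhat n)) ∧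
      (¬ deriv (φ Kbar) 0 < -((n : ℝ) * r / Kbar) → bhat n = 0)) :
    ∀ m n : ℕ, 1 ≤ m → m ≤ n → bhat n ≤ bhat m := by
  intro m n hm hmn
  have hn : 1 ≤ n := hm.trans hmn
  have hbm_nonneg : 0 ≤ bhat m := by
    by_cases hPm : deriv (φ Kbar) 0 < -((m : ℝ) * r / Kbar)
    exacts [((hbhat m hm).1 hPm).1.le, ((hbhat m hm).2 hPm).ge]
  by_cases hPn : deriv (φ Kbar) 0 < -((n : ℝ) * r / Kbar)
  swap
  · exact (hbhat n hn).2 hPn ▸ hbm_nonneg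
  obtain ⟨-, -, huniq⟩ := (hbhat n hn).1 hPn
  obtain ⟨-, hfm, -⟩ := (hbhat m hm).1 (hPn.trans_le (by gcongr))
  have hφ'0 : deriv (φ Kbar) 0 < 0 := hPn.trans (neg_neg_of_pos (by positivity))
  have hψ' : ∀ x ∈ Ici (0:ℝ), deriv ψ x ≠ 0 := by
    intro x hx
    rcases (mem_Ici.1 hx).eq_or_lt with rfl | hx
    · simp [hψd0]
    · exact hψmono.deriv_ne_zero_of_ode (Ici_mem_nhds hx) (hψODE x hx.le) hr.ne' (hψpos x hx).ne'
  have hφ' : ∀ x ∈ Ici (0:ℝ), deriv (φ Kbar) x ≠ 0 := by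
    intro x hx
    rcases (mem_Ici.1 hx).eq_or_lt with rfl | hx
    · exact hφ'0.ne
    · exact (hφanti Kbar hKbar.le).deriv_ne_zero_of_ode (Ici_mem_nhds hx)
        (hφODE Kbar hKbar.le x hx.le) hr.ne' (hφpos Kbar hKbar.le x hx.le).ne'
  have hfcont : ContinuousOn f (Ici 0) := by
    rw [show f = _ from funext hf]
    exact (continuousOn_div_deriv (hψC.of_le (by norm_num)) hψ').sub
      (continuousOn_div_deriv ((hφC Kbar hKbar.le).of_le (by norm_num)) hφ')
  have hf0 : f 0 < Kbar / (n * r) := by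
    have hlt : n * r / Kbar < -deriv (φ Kbar) 0 := by linarith
    rw [hf, hψ0, hψd0, hφ0 Kbar hKbar.le, zero_div, zero_sub, ← div_neg, ← one_div_div (n * r)]
    exact one_div_lt_one_div_of_lt (by positivity) hlt
  exact le_of_unique_pos_preimage (hfcont.mono Icc_subset_Ici_self) hbm_nonneg hf0
    (hfm ▸ by gcongr) huniq

/-- with fixed total maximal extraction rate K̄ (individual rate K̄/n),
the equilibrium threshold b̂(n) (the unique positive solution of
f(b) = K̄/(n·r) when φ_{K̄}'(0) < −n·r/K̄, and 0 otherwise, where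
f(b) = ψ(b)/ψ'(b) − φ_{K̄}(b)/φ_{K̄}'(b) does not depend on n) is nonincreasing in n. -/
theorem stmt_3
    (r c : ℝ) (hr : 0 < r) (hc : 0 < c)
    (μ σ : ℝ → ℝ) (hμ : ContDiff ℝ 1 μ) (hσ : ContDiff ℝ 1 σ)
    (hσpos : ∀ x ≥ (0:ℝ), 0 < σ x ^ 2)
    (hμderiv : ∀ x ≥ (0:ℝ), deriv μ x < r)
    (hμ0 : 0 < μ 0)
    (hμc : ∀ x ≥ c, μ x ≤ r * x - 1 / c)
    (ψ : ℝ → ℝ) (hψC : ContDiff ℝ 3 ψ)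
    (hψ0 : ψ 0 = 0) (hψd0 : deriv ψ 0 = 1)
    (hψpos : ∀ x > (0:ℝ), 0 < ψ x)
    (hψmono : MonotoneOn ψ (Ici (0:ℝ)))
    (hψODE : ∀ x ≥ (0:ℝ),
      (1/2) * σ x ^ 2 * deriv (deriv ψ) x + μ x * deriv ψ x - r * ψ x = 0)
    (φ : ℝ → ℝ → ℝ)
    (hφC : ∀ A ≥ (0:ℝ), ContDiff ℝ 2 (φ A))
    (hφ0 : ∀ A ≥ (0:ℝ), φ A 0 = 1)
    (hφpos : ∀ A ≥ (0:ℝ), ∀ x ≥ (0:ℝ), 0 < φ A x)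
    (hφanti : ∀ A ≥ (0:ℝ), AntitoneOn (φ A) (Ici (0:ℝ)))
    (hφlim : ∀ A ≥ (0:ℝ), Tendsto (φ A) atTop (nhds 0))
    (hφODE : ∀ A ≥ (0:ℝ), ∀ x ≥ (0:ℝ),
      (1/2) * σ x ^ 2 * deriv (deriv (φ A)) x + (μ x - A) * deriv (φ A) x - r * φ A x = 0)
    (Kbar : ℝ) (hKbar : 0 < Kbar)
    (f : ℝ → ℝ)
    (hf : ∀ b, f b = ψ b / deriv ψ b - φ Kbar b / deriv (φ Kbar) b)
    (bhat : ℕ → ℝ)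
    (hbhat : ∀ n : ℕ, 1 ≤ n →
      (deriv (φ Kbar) 0 < -((n : ℝ) * r / Kbar) →
        0 < bhat n ∧ f (bhat n) = Kbar / ((n : ℝ) * r) ∧
        (∀ b' : ℝ, 0 < b' → f b' = Kbar / ((n : ℝ) * r) → b' = bhat n)) ∧
      (¬ deriv (φ Kbar) 0 < -((n : ℝ) * r / Kbar) → bhat n = 0)) :
    ∀ m n : ℕ, 1 ≤ m → m ≤ n → bhat n ≤ bhat m :=
  stmt_3_general r hr μ σ ψ hψC hψ0 hψd0 hψpos hψmono hψODE φ hφC hφ0 hφpos hφanti hφODE Kbar hKbar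
    f hf bhat hbhat
end

section
/- Let 0 < K₁ ≤ K₂ and let b̂₁, b̂₂ ≥ 0. For i = 1, 2 let V_i : [0,∞) → ℝ be continuous, continuously differentiable on (0,∞), twice continuously differentiable on (0,∞)∖{b̂₁,b̂₂}, and concave, and assume: V_i(0) = 0; V_i(x) → K_i/r as x → ∞; V_i'(x) > 1 for 0 < x < b̂_i; V_i'(b̂_i) = 1 if b̂_i > 0; V_i'(x) < 1 for x > b̂_i; and ½σ(x)²V_i''(x) + (μ(x) − K₁·𝟙_{x≥b̂₁} − K₂·𝟙_{x≥b̂₂})·V_i'(x) − r·V_i(x) + K_i·𝟙_{x≥b̂_i} = 0 for all x ∈ (0,∞)∖{b̂₁,b̂₂}. Assume moreover that if m := min(b̂₁,b̂₂) > 0 then there exist a function ψ : [0,m] → ℝ with ψ(x) > 0 and ψ'(x) > 0 for 0 < x ≤ m, and constants A₁, A₂ > 0, such that V_i = A_i·ψ on [0,m] for i = 1,2. Then b̂₁ ≤ b̂₂. -/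
/-!
Suppose `b̂₂ < b̂₁` and put `W = V₁ - V₂`. Below `b̂₂` both value functions are multiples of
the same `ψ`; comparing slopes at `b̂₂`, where `V₂' = 1 < V₁'`, shows `A₁ > A₂`, so `W(b̂₂) ≥ 0`.
On `(b̂₂, b̂₁]` we have `V₁' ≥ 1 > V₂'`, so `W` increases strictly there, while
`W → (K₁ - K₂)/r ≤ 0` at infinity. Hence `W` has an interior maximum at some `x > b̂₁` with
`W(x) > 0`. Subtracting the two ODEs at `x`, where `W' = 0` and `W'' ≤ 0`, gives
`r W(x) ≤ K₁ - K₂ ≤ 0`, a contradiction.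
-/

open Set Filter Topology

theorem IsLocalMax.deriv_deriv_nonpos {f : ℝ → ℝ} {a : ℝ} (hmax : IsLocalMax f a)
    (hc : ContinuousAt f a) : deriv (deriv f) a ≤ 0 := by
  by_contra! hpos
  -- by the second-derivative test `a` is also a local minimum, so `f` is locally constant
  have hmin : IsLocalMin f a := isLocalMin_of_deriv_deriv_pos hpos hmax.deriv_eq_zero hc
  have hconst : f =ᶠ[𝓝 a] fun _ => f a := by
    filter_upwards [hmax, hmin] with y hy₁ hy₂ using le_antisymm hy₁ hy₂
  have hderiv : deriv f =ᶠ[𝓝 a] fun _ => 0 := by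
    filter_upwards [hconst.deriv] with y hy
    rw [hy, deriv_const]
  rw [hderiv.deriv_eq, deriv_const] at hpos
  exact hpos.false

theorem ContDiffOn.differentiableAt_deriv {f : ℝ → ℝ} {s : Set ℝ} {x : ℝ}
    (hf : ContDiffOn ℝ 2 f s) (hs : IsOpen s) (hx : x ∈ s) : DifferentiableAt ℝ (deriv f) x :=
  ((hf.deriv_of_isOpen (m := 1) hs (by norm_num)).differentiableOn one_ne_zero).differentiableAt
    (hs.mem_nhds hx)

theorem IsLocalMax.mul_sub_le_of_ode {f g : ℝ → ℝ} {s : Set ℝ} {x a c r k l : ℝ}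
    (hmax : IsLocalMax (fun y => f y - g y) x)
    (hf : ContDiffOn ℝ 2 f s) (hg : ContDiffOn ℝ 2 g s) (hs : IsOpen s) (hx : x ∈ s)
    (ha : 0 ≤ a)
    (hfode : a * deriv (deriv f) x + c * deriv f x - r * f x + k = 0)
    (hgode : a * deriv (deriv g) x + c * deriv g x - r * g x + l = 0) :
    r * (f x - g x) ≤ k - l := by
  have hdiff : ∀ᶠ y in 𝓝 x, DifferentiableAt ℝ f y ∧ DifferentiableAt ℝ g y := by
    filter_upwards [hs.mem_nhds hx] with y hy
    exact ⟨(hf.differentiableOn two_ne_zero).differentiableAt (hs.mem_nhds hy),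
      (hg.differentiableOn two_ne_zero).differentiableAt (hs.mem_nhds hy)⟩
  have hderiv : deriv (fun y => f y - g y) =ᶠ[𝓝 x] fun y => deriv f y - deriv g y := by
    filter_upwards [hdiff] with y hy using deriv_fun_sub hy.1 hy.2
  have hslope : deriv f x = deriv g x := by
    have := hmax.deriv_eq_zero
    rw [hderiv.eq_of_nhds] at this
    linarith
  have hcurv : deriv (deriv f) x ≤ deriv (deriv g) x := by
    have := hmax.deriv_deriv_nonpos
      (hdiff.self_of_nhds.1.continuousAt.sub hdiff.self_of_nhds.2.continuousAt)
    rw [hderiv.deriv_eq, deriv_fun_sub (hf.differentiableAt_deriv hs hx)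
      (hg.differentiableAt_deriv hs hx)] at this
    linarith
  rw [hslope] at hfode
  nlinarith [mul_le_mul_of_nonneg_left hcurv ha]

theorem exists_isLocalMax_of_tendsto_atTop {f : ℝ → ℝ} {a y l : ℝ}
    (hf : ContinuousOn f (Ici a)) (hlim : Tendsto f atTop (𝓝 l))
    (hay : a ≤ y) (ha : f a < f y) (hl : l < f y) :
    ∃ x, a < x ∧ f y ≤ f x ∧ IsLocalMax f x := by
  obtain ⟨M, hM⟩ := eventually_atTop.1 (hlim.eventually (eventually_lt_nhds hl))
  have hyM : y ≤ max M y := le_max_right _ _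
  obtain ⟨x, hx, hxmax⟩ := isCompact_Icc.exists_isMaxOn (nonempty_Icc.2 (hay.trans hyM))
    (hf.mono Icc_subset_Ici_self)
  have hyx : f y ≤ f x := hxmax ⟨hay, hyM⟩
  have hax : a < x := hx.1.lt_of_ne (by rintro rfl; linarith)
  have hxM : x < max M y := hx.2.lt_of_ne (by rintro rfl; linarith [hM _ (le_max_left M y)])
  exact ⟨x, hax, hyx, hxmax.isLocalMax (Icc_mem_nhds hax hxM)⟩

theorem exists_isLocalMax_pos_of_deriv_pos {f : ℝ → ℝ} {a b l : ℝ}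
    (hf : ContinuousOn f (Ici a)) (hlim : Tendsto f atTop (𝓝 l)) (hl : l ≤ 0)
    (hab : a < b) (ha : 0 ≤ f a) (hf' : ∀ x ∈ Ioc a b, 0 < deriv f x) :
    ∃ x, b < x ∧ 0 < f x ∧ IsLocalMax f x := by
  have hfab : f a < f b := by
    refine strictMonoOn_of_deriv_pos (convex_Icc a b) (hf.mono Icc_subset_Ici_self) ?_
      ⟨le_rfl, hab.le⟩ ⟨hab.le, le_rfl⟩ hab
    rw [interior_Icc]
    exact fun x hx => hf' x (Ioo_subset_Ioc_self hx)
  obtain ⟨x, hax, hbx, hmax⟩ :=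
    exists_isLocalMax_of_tendsto_atTop hf hlim hab.le hfab (by linarith)
  refine ⟨x, not_le.1 fun hxb => (hf' x ⟨hax, hxb⟩).ne' hmax.deriv_eq_zero, by linarith, hmax⟩

theorem mul_deriv_eq_mul_deriv_of_eqOn_mul {f g ψ : ℝ → ℝ} {A B a m : ℝ} (ham : a < m)
    (hf : ∀ x ∈ Ioo a m, f x = A * ψ x) (hg : ∀ x ∈ Ioo a m, g x = B * ψ x)
    (hf' : ContinuousWithinAt (deriv f) (Iio m) m) (hg' : ContinuousWithinAt (deriv g) (Iio m) m) :
    B * deriv f m = A * deriv g m := by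
  have hinner : ∀ x ∈ Ioo a m, B * deriv f x = A * deriv g x := by
    intro x hx
    have hnhds : Ioo a m ∈ 𝓝 x := Ioo_mem_nhds hx.1 hx.2
    rw [(eventuallyEq_of_mem hnhds hf).deriv_eq, (eventuallyEq_of_mem hnhds hg).deriv_eq,
      deriv_const_mul_field, deriv_const_mul_field]
    ring
  exact tendsto_nhds_unique_of_eventuallyEq (hf'.const_mul B) (hg'.const_mul A)
    (eventually_of_mem (Ioo_mem_nhdsLT ham) hinner)

theorem lt_of_eqOn_mul_of_deriv_lt {f g ψ : ℝ → ℝ} {A B a m : ℝ} (ham : a < m)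
    (hf : ∀ x ∈ Ioc a m, f x = A * ψ x) (hg : ∀ x ∈ Ioc a m, g x = B * ψ x)
    (hf' : ContinuousWithinAt (deriv f) (Iio m) m) (hg' : ContinuousWithinAt (deriv g) (Iio m) m)
    (hB : 0 < B) (hψ : 0 < ψ m) (hg'_pos : 0 < deriv g m) (hlt : deriv g m < deriv f m) :
    g m < f m := by
  have hslopes := mul_deriv_eq_mul_deriv_of_eqOn_mul ham (fun x hx => hf x (Ioo_subset_Ioc_self hx))
    (fun x hx => hg x (Ioo_subset_Ioc_self hx)) hf' hg'
  have hBA : B < A := by nlinarith [mul_lt_mul_of_pos_left hlt hB]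
  rw [hf m ⟨ham, le_rfl⟩, hg m ⟨ham, le_rfl⟩]
  exact mul_lt_mul_of_pos_right hBA hψ

theorem stmt_5_general
    (r : ℝ) (hr : 0 < r)
    (μ σ : ℝ → ℝ)
    (K b : Fin 2 → ℝ) (V : Fin 2 → ℝ → ℝ)
    (hKord : K 0 ≤ K 1)
    (hbnn : ∀ i, 0 ≤ b i)
    (hcont : ∀ i, ContinuousOn (V i) (Ici (0:ℝ)))
    (hC1 : ∀ i, ContDiffOn ℝ 1 (V i) (Ioi (0:ℝ)))
    (hC2 : ∀ i, ContDiffOn ℝ 2 (V i) (Ioi (0:ℝ) \ {b 0, b 1}))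
    (h0 : ∀ i, V i 0 = 0)
    (hlim : ∀ i, Tendsto (V i) atTop (nhds (K i / r)))
    (hd_gt : ∀ i, ∀ x, 0 < x → x < b i → 1 < deriv (V i) x)
    (hd_eq : ∀ i, 0 < b i → deriv (V i) (b i) = 1)
    (hd_lt : ∀ i, ∀ x, b i < x → deriv (V i) x < 1)
    (hODE : ∀ i, ∀ x, 0 < x → x ≠ b 0 → x ≠ b 1 →
      (1/2) * σ x ^ 2 * deriv (deriv (V i)) x
        + (μ x - K 0 * (if b 0 ≤ x then 1 else 0) - K 1 * (if b 1 ≤ x then 1 else 0))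
            * deriv (V i) x
        - r * V i x + K i * (if b i ≤ x then 1 else 0) = 0)
    (hpsi : 0 < min (b 0) (b 1) → ∃ (ψ : ℝ → ℝ) (A : Fin 2 → ℝ),
      (∀ x, 0 < x → x ≤ min (b 0) (b 1) → 0 < ψ x ∧ 0 < deriv ψ x) ∧
      (∀ i, 0 < A i) ∧
      (∀ i, ∀ x, 0 ≤ x → x ≤ min (b 0) (b 1) → V i x = A i * ψ x)) :
    b 0 ≤ b 1 := by
  by_contra! hlt
  have hb₁ : 0 ≤ b 1 := hbnn 1
  have hb₀ : 0 < b 0 := hb₁.trans_lt hlt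
  have hdiff : ∀ i, ∀ x, 0 < x → DifferentiableAt ℝ (V i) x := fun i x hx =>
    ((hC1 i).differentiableOn one_ne_zero).differentiableAt (Ioi_mem_nhds hx)
  have hdc : ∀ i, ContinuousOn (deriv (V i)) (Ioi 0) := fun i =>
    (hC1 i).continuousOn_deriv_of_isOpen isOpen_Ioi le_rfl
  set W : ℝ → ℝ := fun x => V 0 x - V 1 x with hW
  have hW_b₁ : 0 ≤ W (b 1) := by
    rcases hb₁.eq_or_lt with h | hb₁
    · simp [hW, ← h, h0]
    rw [min_eq_right hlt.le] at hpsi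
    obtain ⟨ψ, A, hψ, hA, hVA⟩ := hpsi hb₁
    have hV₁' : deriv (V 1) (b 1) = 1 := hd_eq 1 hb₁
    refine sub_nonneg.2 (lt_of_eqOn_mul_of_deriv_lt hb₁ (fun x hx => hVA 0 x hx.1.le hx.2)
      (fun x hx => hVA 1 x hx.1.le hx.2) ((hdc 0).continuousAt (Ioi_mem_nhds hb₁)).continuousWithinAt
      ((hdc 1).continuousAt (Ioi_mem_nhds hb₁)).continuousWithinAt (hA 1) (hψ _ hb₁ le_rfl).1
      (hV₁' ▸ one_pos) (hV₁' ▸ hd_gt 0 _ hb₁ hlt)).le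
  have hW'_pos : ∀ x ∈ Ioc (b 1) (b 0), 0 < deriv W x := by
    intro x hx
    have hx₀ : 0 < x := hb₁.trans_lt hx.1
    rw [hW, deriv_fun_sub (hdiff 0 x hx₀) (hdiff 1 x hx₀), sub_pos]
    rcases hx.2.lt_or_eq with hxb | rfl
    · exact (hd_lt 1 x hx.1).trans (hd_gt 0 x hx₀ hxb)
    · exact (hd_lt 1 _ hx.1).trans_eq (hd_eq 0 hb₀).symm
  obtain ⟨x, hbx, hWx, hmax⟩ := exists_isLocalMax_pos_of_deriv_pos
    (((hcont 0).sub (hcont 1)).mono (Ici_subset_Ici.2 hb₁)) ((hlim 0).sub (hlim 1))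
    (sub_nonpos.2 (by gcongr)) hlt hW_b₁ hW'_pos
  have hb₁x : b 1 < x := hlt.trans hbx
  have hS : IsOpen (Ioi (0:ℝ) \ {b 0, b 1}) := isOpen_Ioi.sdiff (toFinite _).isClosed
  have hxS : x ∈ Ioi (0:ℝ) \ {b 0, b 1} := by simp [hb₀.trans hbx, hbx.ne', hb₁x.ne']
  have e₀ := hODE 0 x hxS.1 hbx.ne' hb₁x.ne'
  have e₁ := hODE 1 x hxS.1 hbx.ne' hb₁x.ne'
  rw [if_pos hbx.le, if_pos hb₁x.le] at e₀ e₁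
  have := hmax.mul_sub_le_of_ode (hC2 0) (hC2 1) hS hxS (by positivity) e₀ e₁
  linarith [mul_pos hr (show 0 < V 0 x - V 1 x from hWx)]

/-- threshold-ordering in the asymmetric game: if the maximal extraction
rates satisfy 0 < K₁ ≤ K₂ and V₁, V₂ are candidate equilibrium value functions of
threshold type with thresholds b̂₁, b̂₂, then b̂₁ ≤ b̂₂.  Here the indices are 0, 1. -/
theorem stmt_5
    (r : ℝ) (hr : 0 < r)
    (μ σ : ℝ → ℝ) (hμ : Continuous μ) (hσ : Continuous σ)
    (K b : Fin 2 → ℝ) (V : Fin 2 → ℝ → ℝ)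
    (hKpos : 0 < K 0) (hKord : K 0 ≤ K 1)
    (hbnn : ∀ i, 0 ≤ b i)
    (hcont : ∀ i, ContinuousOn (V i) (Ici (0:ℝ)))
    (hC1 : ∀ i, ContDiffOn ℝ 1 (V i) (Ioi (0:ℝ)))
    (hC2 : ∀ i, ContDiffOn ℝ 2 (V i) (Ioi (0:ℝ) \ {b 0, b 1}))
    (hconc : ∀ i, ConcaveOn ℝ (Ici (0:ℝ)) (V i))
    (h0 : ∀ i, V i 0 = 0)
    (hlim : ∀ i, Tendsto (V i) atTop (nhds (K i / r)))
    (hd_gt : ∀ i, ∀ x, 0 < x → x < b i → 1 < deriv (V i) x)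
    (hd_eq : ∀ i, 0 < b i → deriv (V i) (b i) = 1)
    (hd_lt : ∀ i, ∀ x, b i < x → deriv (V i) x < 1)
    (hODE : ∀ i, ∀ x, 0 < x → x ≠ b 0 → x ≠ b 1 →
      (1/2) * σ x ^ 2 * deriv (deriv (V i)) x
        + (μ x - K 0 * (if b 0 ≤ x then 1 else 0) - K 1 * (if b 1 ≤ x then 1 else 0))
            * deriv (V i) x
        - r * V i x + K i * (if b i ≤ x then 1 else 0) = 0)
    (hpsi : 0 < min (b 0) (b 1) → ∃ (ψ : ℝ → ℝ) (A : Fin 2 → ℝ),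
      (∀ x, 0 < x → x ≤ min (b 0) (b 1) → 0 < ψ x ∧ 0 < deriv ψ x) ∧
      (∀ i, 0 < A i) ∧
      (∀ i, ∀ x, 0 ≤ x → x ≤ min (b 0) (b 1) → V i x = A i * ψ x)) :
    b 0 ≤ b 1 :=
  stmt_5_general r hr μ σ K b V hKord hbnn hcont hC1 hC2 h0 hlim hd_gt hd_eq hd_lt hODE hpsi
end

section
/- Let 0 < K₁ ≤ K₂ and let 0 ≤ b̂₁ ≤ b̂₂. For i = 1, 2 let V_i : [0,∞) → ℝ be continuous, continuously differentiable on (0,∞), twice continuously differentiable on (0,∞)∖{b̂₁,b̂₂}, and concave, and assume: V_i(0) = 0; V_i(x) → K_i/r as x → ∞; V_i'(x) > 1 for 0 < x < b̂_i; V_i'(b̂_i) = 1 if b̂_i > 0; V_i'(x) < 1 for x > b̂_i; and ½σ(x)²V_i''(x) + (μ(x) − K₁·𝟙_{x≥b̂₁} − K₂·𝟙_{x≥b̂₂})·V_i'(x) − r·V_i(x) + K_i·𝟙_{x≥b̂_i} = 0 for all x ∈ (0,∞)∖{b̂₁,b̂₂}. Assume moreover that if b̂₁ > 0 then there exist a function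 ψ : [0,b̂₁] → ℝ with ψ(x) > 0 and ψ'(x) > 0 for 0 < x ≤ b̂₁, and constants A₁, A₂ > 0, such that V_i = A_i·ψ on [0,b̂₁] for i = 1,2. Then V₁(x) ≤ V₂(x) for all x ≥ 0. -/
/-!
Write `W = V₂ - V₁`. On `[0, b̂₁]` both value functions are multiples of `ψ`, and comparing their
slopes at `b̂₁` (where `V₁' = 1 ≤ V₂'`) orders the multiples, so `W ≥ 0` there. On `[b̂₁, b̂₂]`
we have `V₁' < 1 < V₂'`, so `W` increases. Beyond `b̂₂` both functions solve the same linear ODE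
up to the constants `K₁ ≤ K₂`; at an interior minimum of `W` we have `W' = 0` and `W'' ≥ 0`, so
subtracting the two equations gives `r W = ½ σ² W'' + K₂ - K₁ ≥ 0`. Since `W → (K₂ - K₁)/r ≥ 0`
at infinity, a negative value of `W` would force a negative interior minimum.
-/

open Set Filter Topology

theorem IsLocalMin.deriv_deriv_nonneg_s6 {f : ℝ → ℝ} {x₀ : ℝ} (hmin : IsLocalMin f x₀)
    (hc : ContinuousAt f x₀) : 0 ≤ deriv (deriv f) x₀ := by
  -- if `f'' x₀ < 0` then `x₀` is also a local maximum, so `f` is locally constant near `x₀`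
  by_contra! hneg
  have hconst : f =ᶠ[𝓝 x₀] fun _ => f x₀ := by
    filter_upwards [hmin, isLocalMax_of_deriv_deriv_neg hneg hmin.deriv_eq_zero hc]
      with y hle hge using le_antisymm hge hle
  have hderiv : deriv f =ᶠ[𝓝 x₀] fun _ => 0 := by
    simpa using hconst.deriv
  simp [hderiv.deriv_eq] at hneg

theorem deriv_eq_of_eqOn_Icc {f g : ℝ → ℝ} {a b : ℝ} (hab : a < b)
    (hf : DifferentiableAt ℝ f b) (hg : DifferentiableAt ℝ g b) (h : EqOn f g (Icc a b)) :
    deriv f b = deriv g b := by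
  have hb : b ∈ Icc a b := right_mem_Icc.2 hab.le
  have hu : UniqueDiffWithinAt ℝ (Icc a b) b := uniqueDiffOn_Icc hab b hb
  rw [← hf.derivWithin hu, ← hg.derivWithin hu, derivWithin_congr h (h hb)]

theorem le_of_eqOn_mul_of_deriv_le {f g ψ : ℝ → ℝ} {A B a b x : ℝ} (hab : a < b)
    (hf : EqOn f (fun y => A * ψ y) (Icc a b)) (hg : EqOn g (fun y => B * ψ y) (Icc a b))
    (hfd : DifferentiableAt ℝ f b) (hgd : DifferentiableAt ℝ g b)
    (hfg : deriv f b ≤ deriv g b) (hψ' : 0 < deriv ψ b) (hx : x ∈ Icc a b) (hψ : 0 ≤ ψ x) :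
    f x ≤ g x := by
  have hψd : DifferentiableAt ℝ ψ b := differentiableAt_of_deriv_ne_zero hψ'.ne'
  have hderiv {h : ℝ → ℝ} {C : ℝ} (hd : DifferentiableAt ℝ h b)
      (heq : EqOn h (fun y => C * ψ y) (Icc a b)) : deriv h b = C * deriv ψ b :=
    (deriv_eq_of_eqOn_Icc hab hd (hψd.const_mul C) heq).trans (deriv_const_mul C hψd)
  rw [hderiv hfd hf, hderiv hgd hg] at hfg
  rw [hf hx, hg hx]
  exact mul_le_mul_of_nonneg_right (le_of_mul_le_mul_right hfg hψ') hψ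

theorem le_on_Icc_of_deriv_le {f g : ℝ → ℝ} {a b : ℝ}
    (hf : ContinuousOn f (Icc a b)) (hg : ContinuousOn g (Icc a b))
    (hfd : ∀ x ∈ Ioo a b, DifferentiableAt ℝ f x) (hgd : ∀ x ∈ Ioo a b, DifferentiableAt ℝ g x)
    (hfg : ∀ x ∈ Ioo a b, deriv f x ≤ deriv g x) (ha : f a ≤ g a) {x : ℝ} (hx : x ∈ Icc a b) :
    f x ≤ g x := by
  have hmono : MonotoneOn (g - f) (Icc a b) := by
    refine monotoneOn_of_deriv_nonneg (convex_Icc a b) (hg.sub hf) ?_ ?_ <;>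
      rw [interior_Icc] <;> intro y hy
    · exact ((hgd y hy).sub (hfd y hy)).differentiableWithinAt
    · rw [deriv_sub (hgd y hy) (hfd y hy), sub_nonneg]
      exact hfg y hy
  have := hmono (left_mem_Icc.2 (hx.1.trans hx.2)) hx hx.1
  simp only [Pi.sub_apply] at this
  linarith

theorem nonneg_of_tendsto_of_isLocalMin {f : ℝ → ℝ} {a L : ℝ} (hf : ContinuousOn f (Ici a))
    (ha : 0 ≤ f a) (hlim : Tendsto f atTop (𝓝 L)) (hL : 0 ≤ L)
    (hmin : ∀ x, a < x → IsLocalMin f x → 0 ≤ f x) {x : ℝ} (hx : a ≤ x) : 0 ≤ f x := by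
  by_contra! hneg
  obtain ⟨M, hM⟩ := eventually_atTop.1 (hlim.eventually (eventually_gt_nhds (hneg.trans_le hL)))
  have hxM : x ≤ max M x := le_max_right M x
  obtain ⟨x₀, ⟨hax₀, hx₀M⟩, hx₀min⟩ := isCompact_Icc.exists_isMinOn
    ⟨x, hx, hxM⟩ (hf.mono Icc_subset_Ici_self)
  have hx₀x : f x₀ ≤ f x := hx₀min ⟨hx, hxM⟩
  have ha_lt : a < x₀ := hax₀.lt_of_ne (by rintro rfl; linarith)
  have hlt_M : x₀ < max M x := hx₀M.lt_of_ne (by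
    rintro rfl; linarith [hM (max M x) (le_max_left M x)])
  linarith [hmin x₀ ha_lt (hx₀min.isLocalMin (Icc_mem_nhds ha_lt hlt_M))]

theorem le_of_isLocalMin_sub_of_ode {f g : ℝ → ℝ} {x₀ α β r c d : ℝ}
    (hα : 0 ≤ α) (hr : 0 < r) (hcd : c ≤ d)
    (hfd : ∀ᶠ x in 𝓝 x₀, DifferentiableAt ℝ f x) (hgd : ∀ᶠ x in 𝓝 x₀, DifferentiableAt ℝ g x)
    (hfd2 : DifferentiableAt ℝ (deriv f) x₀) (hgd2 : DifferentiableAt ℝ (deriv g) x₀)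
    (hf : α * deriv (deriv f) x₀ + β * deriv f x₀ - r * f x₀ + c = 0)
    (hg : α * deriv (deriv g) x₀ + β * deriv g x₀ - r * g x₀ + d = 0)
    (hmin : IsLocalMin (g - f) x₀) : f x₀ ≤ g x₀ := by
  have hderiv : deriv (g - f) =ᶠ[𝓝 x₀] deriv g - deriv f := by
    filter_upwards [hfd, hgd] with y hf hg using deriv_sub hg hf
  have hd1 : deriv g x₀ = deriv f x₀ := by
    have := hderiv.eq_of_nhds
    rw [hmin.deriv_eq_zero] at this
    simp only [Pi.sub_apply] at this
    linarith
  have hd2 : 0 ≤ deriv (deriv g) x₀ - deriv (deriv f) x₀ := by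
    rw [← deriv_sub hgd2 hfd2, ← hderiv.deriv_eq]
    exact hmin.deriv_deriv_nonneg_s6 (hgd.self_of_nhds.sub hfd.self_of_nhds).continuousAt
  rw [hd1] at hg
  have hdiffusion := mul_nonneg hα hd2
  rw [mul_sub] at hdiffusion
  exact le_of_mul_le_mul_left (by linarith) hr

theorem stmt_6_general
    (r : ℝ) (hr : 0 < r)
    (μ σ : ℝ → ℝ)
    (K b : Fin 2 → ℝ) (V : Fin 2 → ℝ → ℝ)
    (hKord : K 0 ≤ K 1)
    (hbnn : ∀ i, 0 ≤ b i) (hbord : b 0 ≤ b 1)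
    (hcont : ∀ i, ContinuousOn (V i) (Ici (0:ℝ)))
    (hC1 : ∀ i, ContDiffOn ℝ 1 (V i) (Ioi (0:ℝ)))
    (hC2 : ∀ i, ContDiffOn ℝ 2 (V i) (Ioi (0:ℝ) \ {b 0, b 1}))
    (h0 : ∀ i, V i 0 = 0)
    (hlim : ∀ i, Tendsto (V i) atTop (nhds (K i / r)))
    (hd_gt : ∀ i, ∀ x, 0 < x → x < b i → 1 < deriv (V i) x)
    (hd_eq : ∀ i, 0 < b i → deriv (V i) (b i) = 1)
    (hd_lt : ∀ i, ∀ x, b i < x → deriv (V i) x < 1)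
    (hODE : ∀ i, ∀ x, 0 < x → x ≠ b 0 → x ≠ b 1 →
      (1/2) * σ x ^ 2 * deriv (deriv (V i)) x
        + (μ x - K 0 * (if b 0 ≤ x then 1 else 0) - K 1 * (if b 1 ≤ x then 1 else 0))
            * deriv (V i) x
        - r * V i x + K i * (if b i ≤ x then 1 else 0) = 0)
    (hpsi : 0 < b 0 → ∃ (ψ : ℝ → ℝ) (A : Fin 2 → ℝ),
      (∀ x, 0 < x → x ≤ b 0 → 0 < ψ x ∧ 0 < deriv ψ x) ∧
      (∀ i, 0 < A i) ∧
      (∀ i, ∀ x, 0 ≤ x → x ≤ b 0 → V i x = A i * ψ x)) :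
    ∀ x ≥ (0:ℝ), V 0 x ≤ V 1 x := by
  have hdiff (i : Fin 2) {x : ℝ} (hx : 0 < x) : DifferentiableAt ℝ (V i) x :=
    ((hC1 i).differentiableOn one_ne_zero).differentiableAt (Ioi_mem_nhds hx)
  have hleft : ∀ x ∈ Icc 0 (b 0), V 0 x ≤ V 1 x := by
    rintro x ⟨hx0, hxb⟩
    rcases hx0.eq_or_lt with rfl | hx
    · rw [h0, h0]
    have hb : 0 < b 0 := hx.trans_le hxb
    obtain ⟨ψ, A, hψ, -, hVψ⟩ := hpsi hb
    have hd1 : 1 ≤ deriv (V 1) (b 0) := by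
      rcases hbord.eq_or_lt with heq | hlt
      · rw [heq, hd_eq 1 (heq ▸ hb)]
      · exact (hd_gt 1 _ hb hlt).le
    exact le_of_eqOn_mul_of_deriv_le hb (fun y hy => hVψ 0 y hy.1 hy.2)
      (fun y hy => hVψ 1 y hy.1 hy.2) (hdiff 0 hb) (hdiff 1 hb) ((hd_eq 0 hb).trans_le hd1)
      (hψ _ hb le_rfl).2 ⟨hx0, hxb⟩ (hψ x hx hxb).1.le
  have hmid : ∀ x ∈ Icc (b 0) (b 1), V 0 x ≤ V 1 x := fun x hx => by
    have hpos {y : ℝ} (hy : y ∈ Ioo (b 0) (b 1)) : 0 < y := (hbnn 0).trans_lt hy.1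
    exact le_on_Icc_of_deriv_le ((hcont 0).mono fun y hy => (hbnn 0).trans hy.1)
      ((hcont 1).mono fun y hy => (hbnn 0).trans hy.1) (fun y hy => hdiff 0 (hpos hy))
      (fun y hy => hdiff 1 (hpos hy))
      (fun y hy => ((hd_lt 0 y hy.1).trans (hd_gt 1 y (hpos hy) hy.2)).le)
      (hleft _ ⟨hbnn 0, le_rfl⟩) hx
  have hminimum : ∀ y, b 1 < y → IsLocalMin (V 1 - V 0) y → V 0 y ≤ V 1 y := by
    intro y hy hmin
    have hy0 : 0 < y := (hbnn 1).trans_lt hy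
    have hyb : y ≠ b 0 := (hbord.trans_lt hy).ne'
    have hU : IsOpen (Ioi (0:ℝ) \ {b 0, b 1}) := isOpen_Ioi.sdiff (toFinite _).isClosed
    have hyU : y ∈ Ioi (0:ℝ) \ {b 0, b 1} := ⟨hy0, by simp [hyb, hy.ne']⟩
    have hode0 := hODE 0 y hy0 hyb hy.ne'
    have hode1 := hODE 1 y hy0 hyb hy.ne'
    simp only [if_pos (hbord.trans hy.le), if_pos hy.le, mul_one] at hode0 hode1
    exact le_of_isLocalMin_sub_of_ode (by positivity) hr hKord
      ((eventually_gt_nhds hy0).mono fun _ => hdiff 0)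
      ((eventually_gt_nhds hy0).mono fun _ => hdiff 1)
      ((hC2 0).differentiableAt_deriv hU hyU) ((hC2 1).differentiableAt_deriv hU hyU)
      hode0 hode1 hmin
  intro x hx
  rcases le_total x (b 1) with hxb | hxb
  · rcases le_total x (b 0) with hxb' | hxb'
    · exact hleft x ⟨hx, hxb'⟩
    · exact hmid x ⟨hxb', hxb⟩
  · exact sub_nonneg.1 (nonneg_of_tendsto_of_isLocalMin (a := b 1)
      (((hcont 1).sub (hcont 0)).mono fun y hy => (hbnn 1).trans hy)
      (sub_nonneg.2 (hmid _ ⟨hbord, le_rfl⟩)) ((hlim 1).sub (hlim 0))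
      (sub_nonneg.2 (div_le_div_of_nonneg_right hKord hr.le))
      (fun y hy hmin => sub_nonneg.2 (hminimum y hy hmin)) hxb)

/-- value-ordering in the asymmetric game: if 0 < K₁ ≤ K₂ and
0 ≤ b̂₁ ≤ b̂₂ with V₁, V₂ candidate equilibrium value functions of threshold type,
then V₁(x) ≤ V₂(x) for all x ≥ 0.  Here the indices are 0, 1. -/
theorem stmt_6
    (r : ℝ) (hr : 0 < r)
    (μ σ : ℝ → ℝ) (hμ : Continuous μ) (hσ : Continuous σ)
    (K b : Fin 2 → ℝ) (V : Fin 2 → ℝ → ℝ)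
    (hKpos : 0 < K 0) (hKord : K 0 ≤ K 1)
    (hbnn : ∀ i, 0 ≤ b i) (hbord : b 0 ≤ b 1)
    (hcont : ∀ i, ContinuousOn (V i) (Ici (0:ℝ)))
    (hC1 : ∀ i, ContDiffOn ℝ 1 (V i) (Ioi (0:ℝ)))
    (hC2 : ∀ i, ContDiffOn ℝ 2 (V i) (Ioi (0:ℝ) \ {b 0, b 1}))
    (hconc : ∀ i, ConcaveOn ℝ (Ici (0:ℝ)) (V i))
    (h0 : ∀ i, V i 0 = 0)
    (hlim : ∀ i, Tendsto (V i) atTop (nhds (K i / r)))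
    (hd_gt : ∀ i, ∀ x, 0 < x → x < b i → 1 < deriv (V i) x)
    (hd_eq : ∀ i, 0 < b i → deriv (V i) (b i) = 1)
    (hd_lt : ∀ i, ∀ x, b i < x → deriv (V i) x < 1)
    (hODE : ∀ i, ∀ x, 0 < x → x ≠ b 0 → x ≠ b 1 →
      (1/2) * σ x ^ 2 * deriv (deriv (V i)) x
        + (μ x - K 0 * (if b 0 ≤ x then 1 else 0) - K 1 * (if b 1 ≤ x then 1 else 0))
            * deriv (V i) x
        - r * V i x + K i * (if b i ≤ x then 1 else 0) = 0)
    (hpsi : 0 < b 0 → ∃ (ψ : ℝ → ℝ) (A : Fin 2 → ℝ),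
      (∀ x, 0 < x → x ≤ b 0 → 0 < ψ x ∧ 0 < deriv ψ x) ∧
      (∀ i, 0 < A i) ∧
      (∀ i, ∀ x, 0 ≤ x → x ≤ b 0 → V i x = A i * ψ x)) :
    ∀ x ≥ (0:ℝ), V 0 x ≤ V 1 x :=
  stmt_6_general r hr μ σ K b V hKord hbnn hbord hcont hC1 hC2 h0 hlim hd_gt hd_eq hd_lt hODE hpsi
end

section
/- There exists a unique b* ∈ [0,∞) such that ψ''(x) < 0 for all x ∈ [0, b*) and ψ''(x) > 0 for all x ∈ (b*, ∞). Moreover, if μ(0) > 0 then b* > 0 and ψ''(b*) = 0, while if μ(0) ≤ 0 then b* = 0 and ψ''(x) > 0 for all x > 0. In particular, ψ is strictly concave on [0,b*] and strictly convex on [b*,∞), with b* < ∞. -/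
/-!
Write `g = rψ - μψ'`, so that the ODE reads `½σ²ψ'' = g` on `[0,∞)` and `ψ''` has the sign of `g`
there. At a zero `x ≥ 0` of `g` we have `ψ''(x) = 0` and `ψ'(x) > 0`, hence
`g'(x) = (r - μ'(x)) ψ'(x) > 0`: `g` can only cross zero upwards, so once nonnegative it stays
positive. It does become nonnegative, because if `ψ'' < 0` on `[0,c]` the mean value theorem gives
`ψ(c) > c ψ'(c)`, and then the growth bound on `μ` at `c` forces `g(c) > 0`. The inflection point is
`b* = inf {x ≥ 0 | g x ≥ 0}`, and `g(0) = -μ(0)` decides whether `b* > 0`.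
-/

open Set Filter Topology

lemma MonotoneOn.deriv_nonneg_of_uniqueDiffWithinAt {f : ℝ → ℝ} {s : Set ℝ} {x : ℝ}
    (hf : MonotoneOn f s) (hs : UniqueDiffWithinAt ℝ s x) (hd : DifferentiableAt ℝ f x) :
    0 ≤ deriv f x :=
  hd.derivWithin hs ▸ hf.derivWithin_nonneg

section SignChange

variable {g : ℝ → ℝ} {a : ℝ}

lemma le_of_neg_on_Ico_of_pos_on_Ioi {b b' : ℝ} (hb' : a ≤ b') (hneg : ∀ x, a ≤ x → x < b → g x < 0)
    (hpos : ∀ x, b' < x → 0 < g x) : b ≤ b' := by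
  by_contra! h
  obtain ⟨y, hb'y, hyb⟩ := exists_between h
  exact (hneg y (hb'.trans hb'y.le) hyb).not_gt (hpos y hb'y)

lemma eventually_pos_nhdsGT_of_deriv_pos_at_zeros (hg : Continuous g)
    (hzero : ∀ x, a ≤ x → g x = 0 → 0 < deriv g x) {x : ℝ} (hx : a ≤ x) (hgx : 0 ≤ g x) :
    ∀ᶠ y in 𝓝[>] x, 0 < g y := by
  rcases hgx.lt_or_eq with hgx | hgx
  · exact nhdsWithin_le_nhds ((hg.tendsto x).eventually (eventually_gt_nhds hgx))
  · filter_upwards [nhdsWithin_le_nhds (eventually_nhdsWithin_sign_eq_of_deriv_pos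
      (hzero x hx hgx.symm) hgx.symm), self_mem_nhdsWithin] with y hsign hxy
    rwa [sign_pos (sub_pos.2 hxy), sign_eq_one_iff] at hsign

lemma nonneg_of_deriv_pos_at_zeros (hg : Continuous g)
    (hzero : ∀ x, a ≤ x → g x = 0 → 0 < deriv g x) {b x : ℝ} (hab : a ≤ b) (hgb : 0 ≤ g b)
    (hbx : b ≤ x) : 0 ≤ g x := by
  have hclosed : IsClosed ({y | 0 ≤ g y} ∩ Icc b x) :=
    (isClosed_le continuous_const hg).inter isClosed_Icc
  refine hclosed.Icc_subset_of_forall_mem_nhdsWithin hgb (fun y hy => ?_) ⟨hbx, le_rfl⟩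
  filter_upwards [eventually_pos_nhdsGT_of_deriv_pos_at_zeros hg hzero (hab.trans hy.2.1) hy.1]
    with z hz using hz.le

lemma pos_of_deriv_pos_at_zeros (hg : Continuous g)
    (hzero : ∀ x, a ≤ x → g x = 0 → 0 < deriv g x) {b x : ℝ} (hab : a ≤ b) (hgb : 0 ≤ g b)
    (hbx : b < x) : 0 < g x := by
  refine (nonneg_of_deriv_pos_at_zeros hg hzero hab hgb hbx.le).lt_of_ne' fun hgx => ?_
  have hleft : ∀ᶠ y in 𝓝[<] x, g y < 0 := by
    filter_upwards [nhdsWithin_le_nhds (eventually_nhdsWithin_sign_eq_of_deriv_pos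
      (hzero x (hab.trans hbx.le) hgx) hgx), self_mem_nhdsWithin] with y hsign hyx
    rwa [sign_neg (sub_neg.2 hyx), sign_eq_neg_one_iff] at hsign
  obtain ⟨y, hgy, hby, -⟩ := (hleft.and (Ioo_mem_nhdsLT hbx)).exists
  exact hgy.not_ge (nonneg_of_deriv_pos_at_zeros hg hzero hab hgb hby.le)

lemma exists_sign_change_of_deriv_pos_at_zeros (hg : Continuous g)
    (hzero : ∀ x, a ≤ x → g x = 0 → 0 < deriv g x) (hnonneg : ∃ x, a ≤ x ∧ 0 ≤ g x) :
    ∃ b, a ≤ b ∧ (∀ x, a ≤ x → x < b → g x < 0) ∧ (∀ x, b < x → 0 < g x) ∧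
      (g a < 0 → a < b ∧ g b = 0) := by
  let S := {x | a ≤ x ∧ 0 ≤ g x}
  have hS : BddBelow S := ⟨a, fun x hx => hx.1⟩
  have hbS : sInf S ∈ S :=
    ((isClosed_le continuous_const continuous_id).inter (isClosed_le continuous_const hg)).csInf_mem
      hnonneg hS
  have hneg : ∀ x, a ≤ x → x < sInf S → g x < 0 := fun x hax hx =>
    not_le.1 fun hgx => hx.not_ge (csInf_le hS ⟨hax, hgx⟩)
  refine ⟨sInf S, hbS.1, hneg, fun x hx => pos_of_deriv_pos_at_zeros hg hzero hbS.1 hbS.2 hx,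
    fun hga => ?_⟩
  have hab : a < sInf S := hbS.1.lt_of_ne fun h => hga.not_ge (h ▸ hbS.2)
  refine ⟨hab, hbS.2.antisymm' (not_lt.1 fun hgb => ?_)⟩
  obtain ⟨y, hy, hgy⟩ := intermediate_value_Ioo hab.le hg.continuousOn ⟨hga, hgb⟩
  exact (hneg y hy.1.le hy.2).ne hgy

end SignChange

section Inflection

variable {r : ℝ} {μ σ ψ : ℝ → ℝ} {x : ℝ}

/-- `rψ - μψ'`, which by the ODE equals `½σ²ψ''` on `[0,∞)` but, unlike the latter, is
differentiable without any regularity of `σ`. -/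
noncomputable def diffusionTerm (r : ℝ) (μ ψ : ℝ → ℝ) (x : ℝ) : ℝ :=
  r * ψ x - μ x * deriv ψ x

lemma diffusionTerm_zero (hψ0 : ψ 0 = 0) (hψd0 : deriv ψ 0 = 1) :
    diffusionTerm r μ ψ 0 = -μ 0 := by
  simp [diffusionTerm, hψ0, hψd0]

lemma hasDerivAt_diffusionTerm (hμ : DifferentiableAt ℝ μ x) (hψ : DifferentiableAt ℝ ψ x)
    (hψ' : DifferentiableAt ℝ (deriv ψ) x) :
    HasDerivAt (diffusionTerm r μ ψ)
      ((r - deriv μ x) * deriv ψ x - μ x * deriv (deriv ψ) x) x :=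
  ((hψ.hasDerivAt.const_mul r).sub (hμ.hasDerivAt.mul hψ'.hasDerivAt)).congr_deriv (by ring)

lemma continuous_diffusionTerm (hμ : Differentiable ℝ μ) (hψ : Differentiable ℝ ψ)
    (hψ' : Differentiable ℝ (deriv ψ)) : Continuous (diffusionTerm r μ ψ) :=
  continuous_iff_continuousAt.2 fun x =>
    (hasDerivAt_diffusionTerm (hμ x) (hψ x) (hψ' x)).continuousAt

lemma deriv2_eq_mul_diffusionTerm (hσ : 0 < σ x ^ 2)
    (hode : (1/2) * σ x ^ 2 * deriv (deriv ψ) x + μ x * deriv ψ x - r * ψ x = 0) :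
    deriv (deriv ψ) x = 2 / σ x ^ 2 * diffusionTerm r μ ψ x := by
  rw [diffusionTerm, div_mul_eq_mul_div, eq_div_iff hσ.ne']
  linarith

lemma deriv_pos_of_diffusionTerm_eq_zero (hr : 0 < r) (hψd0 : deriv ψ 0 = 1)
    (hψpos : ∀ x > 0, 0 < ψ x) (hx : 0 ≤ x) (hψ' : 0 ≤ deriv ψ x)
    (hgx : diffusionTerm r μ ψ x = 0) : 0 < deriv ψ x := by
  refine hψ'.lt_of_ne fun hψ'x => ?_
  have hψx : ψ x = 0 := by
    rw [diffusionTerm, ← hψ'x, mul_zero, sub_zero, mul_eq_zero] at hgx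
    exact hgx.resolve_left hr.ne'
  rcases hx.lt_or_eq with hx | rfl
  · exact (hψpos x hx).ne' hψx
  · exact zero_ne_one (hψ'x.trans hψd0)

lemma deriv_diffusionTerm_pos (hμ : DifferentiableAt ℝ μ x) (hψ : DifferentiableAt ℝ ψ x)
    (hψ' : DifferentiableAt ℝ (deriv ψ) x) (hμ' : deriv μ x < r) (hψ'x : 0 < deriv ψ x)
    (hψ''x : deriv (deriv ψ) x = 0) : 0 < deriv (diffusionTerm r μ ψ) x := by
  rw [(hasDerivAt_diffusionTerm hμ hψ hψ').deriv, hψ''x, mul_zero, sub_zero]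
  exact mul_pos (sub_pos.2 hμ') hψ'x

lemma diffusionTerm_pos_of_strictAntiOn {c : ℝ} (hr : 0 < r) (hc : 0 < c)
    (hμc : μ c ≤ r * c - 1 / c) (hψ : Differentiable ℝ ψ) (hψ0 : ψ 0 = 0)
    (hanti : StrictAntiOn (deriv ψ) (Icc 0 c)) (hψ'c : 0 ≤ deriv ψ c) :
    0 < diffusionTerm r μ ψ c := by
  obtain ⟨ξ, hξ, hψξ⟩ := exists_deriv_eq_slope ψ hc hψ.continuous.continuousOn hψ.differentiableOn
  rw [hψ0, sub_zero, sub_zero] at hψξ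
  have hψc : ψ c = c * deriv ψ ξ := by rw [hψξ, mul_div_cancel₀ _ hc.ne']
  have hψ'ξ : deriv ψ c < deriv ψ ξ := hanti ⟨hξ.1.le, hξ.2.le⟩ ⟨hc.le, le_rfl⟩ hξ.2
  have hdrift : μ c * deriv ψ c ≤ (r * c - 1 / c) * deriv ψ c :=
    mul_le_mul_of_nonneg_right hμc hψ'c
  calc 0 < r * c * (deriv ψ ξ - deriv ψ c) + deriv ψ c / c :=
        add_pos_of_pos_of_nonneg (mul_pos (mul_pos hr hc) (sub_pos.2 hψ'ξ)) (div_nonneg hψ'c hc.le)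
    _ = r * ψ c - (r * c - 1 / c) * deriv ψ c := by rw [hψc]; ring
    _ ≤ diffusionTerm r μ ψ c := by rw [diffusionTerm]; linarith

lemma exists_diffusionTerm_nonneg {c : ℝ} (hr : 0 < r) (hc : 0 < c)
    (hμc : μ c ≤ r * c - 1 / c) (hψ : Differentiable ℝ ψ) (hψ' : Differentiable ℝ (deriv ψ))
    (hψ0 : ψ 0 = 0) (hψ'c : 0 ≤ deriv ψ c) (hσpos : ∀ x ≥ (0:ℝ), 0 < σ x ^ 2)
    (hode : ∀ x ≥ (0:ℝ),
      (1/2) * σ x ^ 2 * deriv (deriv ψ) x + μ x * deriv ψ x - r * ψ x = 0) :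
    ∃ x, 0 ≤ x ∧ 0 ≤ diffusionTerm r μ ψ x := by
  by_contra! hneg
  have hanti : StrictAntiOn (deriv ψ) (Icc 0 c) := by
    refine strictAntiOn_of_deriv_neg (convex_Icc 0 c) hψ'.continuous.continuousOn fun x hx => ?_
    rw [interior_Icc] at hx; rw [deriv2_eq_mul_diffusionTerm (hσpos x hx.1.le) (hode x hx.1.le)]
    exact mul_neg_of_pos_of_neg (div_pos two_pos (hσpos x hx.1.le)) (hneg x hx.1.le)
  exact (hneg c hc.le).not_gt
    (diffusionTerm_pos_of_strictAntiOn hr hc hμc hψ hψ0 hanti hψ'c)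

end Inflection

theorem stmt_7_general
    (r c : ℝ) (hr : 0 < r) (hc : 0 < c)
    (μ σ : ℝ → ℝ) (hμ : ContDiff ℝ 1 μ)
    (hσpos : ∀ x ≥ (0:ℝ), 0 < σ x ^ 2)
    (hμderiv : ∀ x ≥ (0:ℝ), deriv μ x < r)
    (hμc : ∀ x ≥ c, μ x ≤ r * x - 1 / c)
    (ψ : ℝ → ℝ) (hψC : ContDiff ℝ 3 ψ)
    (hψ0 : ψ 0 = 0) (hψd0 : deriv ψ 0 = 1)
    (hψpos : ∀ x > (0:ℝ), 0 < ψ x)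
    (hψmono : MonotoneOn ψ (Ici (0:ℝ)))
    (hψODE : ∀ x ≥ (0:ℝ),
      (1/2) * σ x ^ 2 * deriv (deriv ψ) x + μ x * deriv ψ x - r * ψ x = 0) :
    ∃ bs : ℝ, 0 ≤ bs ∧
      (∀ x, 0 ≤ x → x < bs → deriv (deriv ψ) x < 0) ∧
      (∀ x, bs < x → 0 < deriv (deriv ψ) x) ∧
      (0 < μ 0 → 0 < bs ∧ deriv (deriv ψ) bs = 0) ∧
      (μ 0 ≤ 0 → bs = 0 ∧ ∀ x > (0:ℝ), 0 < deriv (deriv ψ) x) ∧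
      StrictConcaveOn ℝ (Icc 0 bs) ψ ∧
      StrictConvexOn ℝ (Ici bs) ψ ∧
      (∀ bs' : ℝ, 0 ≤ bs' →
        (∀ x, 0 ≤ x → x < bs' → deriv (deriv ψ) x < 0) →
        (∀ x, bs' < x → 0 < deriv (deriv ψ) x) → bs' = bs) := by
  have hμ' : Differentiable ℝ μ := hμ.differentiable one_ne_zero
  have hψ : Differentiable ℝ ψ := hψC.differentiable (by norm_num)
  have hψ' : Differentiable ℝ (deriv ψ) := by
    simpa using hψC.differentiable_iteratedDeriv 1 (by norm_num)
  have hψ'nonneg : ∀ x ≥ (0:ℝ), 0 ≤ deriv ψ x := fun x hx =>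
    hψmono.deriv_nonneg_of_uniqueDiffWithinAt (uniqueDiffOn_Ici 0 x hx) (hψ x)
  have hψ'' : ∀ x ≥ (0:ℝ), deriv (deriv ψ) x = 2 / σ x ^ 2 * diffusionTerm r μ ψ x :=
    fun x hx => deriv2_eq_mul_diffusionTerm (hσpos x hx) (hψODE x hx)
  have hfac : ∀ x ≥ (0:ℝ), 0 < 2 / σ x ^ 2 := fun x hx => div_pos two_pos (hσpos x hx)
  have hcross : ∀ x, 0 ≤ x → diffusionTerm r μ ψ x = 0 → 0 < deriv (diffusionTerm r μ ψ) x :=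
    fun x hx hgx => deriv_diffusionTerm_pos (hμ' x) (hψ x) (hψ' x) (hμderiv x hx)
      (deriv_pos_of_diffusionTerm_eq_zero hr hψd0 hψpos hx (hψ'nonneg x hx) hgx)
      (by rw [hψ'' x hx, hgx, mul_zero])
  obtain ⟨bs, hbs, hneg, hpos, hroot⟩ := exists_sign_change_of_deriv_pos_at_zeros
    (continuous_diffusionTerm hμ' hψ hψ') hcross (exists_diffusionTerm_nonneg hr hc
      (hμc c le_rfl) hψ hψ' hψ0 (hψ'nonneg c hc.le) hσpos hψODE)
  have hlt : ∀ x, 0 ≤ x → x < bs → deriv (deriv ψ) x < 0 := fun x hx hxb => by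
    rw [hψ'' x hx]; exact mul_neg_of_pos_of_neg (hfac x hx) (hneg x hx hxb)
  have hgt : ∀ x, bs < x → 0 < deriv (deriv ψ) x := fun x hx => by
    rw [hψ'' x (hbs.trans hx.le)]; exact mul_pos (hfac x (hbs.trans hx.le)) (hpos x hx)
  have hbs0 : μ 0 ≤ 0 → bs = 0 := fun hμ0 => by
    refine hbs.antisymm' (not_lt.1 fun hb => (hneg 0 le_rfl hb).not_ge ?_)
    rw [diffusionTerm_zero hψ0 hψd0]; linarith
  have huniq : ∀ bs', 0 ≤ bs' → (∀ x, 0 ≤ x → x < bs' → deriv (deriv ψ) x < 0) →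
      (∀ x, bs' < x → 0 < deriv (deriv ψ) x) → bs' = bs := fun bs' hbs' hlt' hgt' =>
    (le_of_neg_on_Ico_of_pos_on_Ioi hbs hlt' hgt).antisymm
      (le_of_neg_on_Ico_of_pos_on_Ioi hbs' hlt hgt')
  have hconcave : StrictConcaveOn ℝ (Icc 0 bs) ψ :=
    strictConcaveOn_of_deriv2_neg (convex_Icc 0 bs) hψ.continuous.continuousOn fun x hx => by
      rw [interior_Icc] at hx; exact hlt x hx.1.le hx.2
  have hconvex : StrictConvexOn ℝ (Ici bs) ψ :=
    strictConvexOn_of_deriv2_pos (convex_Ici bs) hψ.continuous.continuousOn fun x hx => by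
      rw [interior_Ici] at hx; exact hgt x hx
  refine ⟨bs, hbs, hlt, hgt, fun hμ0 => ?_,
    fun hμ0 => ⟨hbs0 hμ0, fun x hx => hgt x (hbs0 hμ0 ▸ hx)⟩, hconcave, hconvex, huniq⟩
  obtain ⟨hbs_pos, hgbs⟩ := hroot (by rw [diffusionTerm_zero hψ0 hψd0]; linarith)
  exact ⟨hbs_pos, by rw [hψ'' bs hbs, hgbs, mul_zero]⟩

/-- existence and uniqueness of the inflection point b* of ψ, with
ψ'' < 0 before and ψ'' > 0 after; b* > 0 with ψ''(b*) = 0 if μ(0) > 0, and b* = 0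
if μ(0) ≤ 0; ψ is strictly concave on [0,b*] and strictly convex on [b*,∞). -/
theorem stmt_7
    (r c : ℝ) (hr : 0 < r) (hc : 0 < c)
    (μ σ : ℝ → ℝ) (hμ : ContDiff ℝ 1 μ) (hσ : ContDiff ℝ 1 σ)
    (hσpos : ∀ x ≥ (0:ℝ), 0 < σ x ^ 2)
    (hμderiv : ∀ x ≥ (0:ℝ), deriv μ x < r)
    (hμc : ∀ x ≥ c, μ x ≤ r * x - 1 / c)
    (ψ : ℝ → ℝ) (hψC : ContDiff ℝ 3 ψ)
    (hψ0 : ψ 0 = 0) (hψd0 : deriv ψ 0 = 1)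
    (hψpos : ∀ x > (0:ℝ), 0 < ψ x)
    (hψmono : MonotoneOn ψ (Ici (0:ℝ)))
    (hψODE : ∀ x ≥ (0:ℝ),
      (1/2) * σ x ^ 2 * deriv (deriv ψ) x + μ x * deriv ψ x - r * ψ x = 0) :
    ∃ bs : ℝ, 0 ≤ bs ∧
      (∀ x, 0 ≤ x → x < bs → deriv (deriv ψ) x < 0) ∧
      (∀ x, bs < x → 0 < deriv (deriv ψ) x) ∧
      (0 < μ 0 → 0 < bs ∧ deriv (deriv ψ) bs = 0) ∧
      (μ 0 ≤ 0 → bs = 0 ∧ ∀ x > (0:ℝ), 0 < deriv (deriv ψ) x) ∧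
      StrictConcaveOn ℝ (Icc 0 bs) ψ ∧
      StrictConvexOn ℝ (Ici bs) ψ ∧
      (∀ bs' : ℝ, 0 ≤ bs' →
        (∀ x, 0 ≤ x → x < bs' → deriv (deriv ψ) x < 0) →
        (∀ x, bs' < x → 0 < deriv (deriv ψ) x) → bs' = bs) :=
  stmt_7_general r c hr hc μ σ hμ hσpos hμderiv hμc ψ hψC hψ0 hψd0 hψpos hψmono hψODE
end

section
/- One has ψ'(x) > 0 for every x ≥ 0. -/
open Set Filter Topology

/-- If `f` is monotone on `Ici 0` and differentiable at `x ≥ 0`, then `0 ≤ deriv f x`. -/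
lemma aux_deriv_nonneg {f : ℝ → ℝ} (hmono : MonotoneOn f (Ici (0:ℝ)))
    {x : ℝ} (hx : 0 ≤ x) (hdiff : DifferentiableAt ℝ f x) : 0 ≤ deriv f x := by
  have h := hasDerivAt_iff_tendsto_slope.mp hdiff.hasDerivAt
  have h' : Tendsto (slope f x) (𝓝[>] x) (𝓝 (deriv f x)) :=
    h.mono_left (nhdsWithin_mono x fun y hy => ne_of_gt hy)
  refine ge_of_tendsto h' ?_
  filter_upwards [self_mem_nhdsWithin] with y hy
  have hxy : x < y := hy
  have : f x ≤ f y := hmono hx (le_trans hx hxy.le) hxy.le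
  have hpos : 0 < y - x := by linarith
  simp only [slope_def_field]
  rw [div_nonneg_iff]
  left; constructor <;> linarith

/-- ψ'(x) > 0 for every x ≥ 0. -/
theorem stmt_8
    (r : ℝ) (hr : 0 < r)
    (μ σ : ℝ → ℝ) (hμ : Continuous μ) (hσ : Continuous σ)
    (hσpos : ∀ x ≥ (0:ℝ), 0 < σ x ^ 2)
    (ψ : ℝ → ℝ) (hψC : ContDiff ℝ 2 ψ)
    (hψ0 : ψ 0 = 0) (hψd0 : deriv ψ 0 = 1)
    (hψpos : ∀ x > (0:ℝ), 0 < ψ x)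
    (hψmono : MonotoneOn ψ (Ici (0:ℝ)))
    (hψODE : ∀ x ≥ (0:ℝ),
      (1/2) * σ x ^ 2 * deriv (deriv ψ) x + μ x * deriv ψ x - r * ψ x = 0) :
    ∀ x ≥ (0:ℝ), 0 < deriv ψ x := by
  -- ψ is differentiable, and deriv ψ is differentiable
  have hψdiff : Differentiable ℝ ψ := hψC.differentiable (by norm_num)
  have hψ'diff : Differentiable ℝ (deriv ψ) :=
    (hψC.iterate_deriv' 1 1).differentiable (by norm_num)
  have hnonneg : ∀ x ≥ (0:ℝ), 0 ≤ deriv ψ x := fun x hx =>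
    aux_deriv_nonneg hψmono hx (hψdiff x)
  intro x hx
  rcases eq_or_lt_of_le hx with hx0 | hxpos
  · rw [← hx0, hψd0]; norm_num
  rcases lt_or_eq_of_le (hnonneg x hx) with h | h
  · exact h
  exfalso
  -- from the ODE, ψ''(x) > 0
  have hODE := hψODE x hx
  rw [← h] at hODE
  have hσx := hσpos x hx
  have hψx := hψpos x hxpos
  have hψ'' : 0 < deriv (deriv ψ) x := by
    have : (1/2) * σ x ^ 2 * deriv (deriv ψ) x = r * ψ x := by linarith
    nlinarith
  -- so slope of deriv ψ at x from the left is eventually positive, forcing deriv ψ y < 0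
  have hslope : Tendsto (slope (deriv ψ) x) (𝓝[<] x) (𝓝 (deriv (deriv ψ) x)) :=
    (hasDerivAt_iff_tendsto_slope.mp (hψ'diff x).hasDerivAt).mono_left
      (nhdsWithin_mono x fun y hy => ne_of_lt hy)
  have hev : ∀ᶠ y in 𝓝[<] x, 0 < slope (deriv ψ) x y :=
    hslope.eventually (eventually_gt_nhds hψ'')
  have hev2 : ∀ᶠ y in 𝓝[<] x, (0:ℝ) < y :=
    eventually_nhdsWithin_of_eventually_nhds (eventually_gt_nhds hxpos)
  have hev3 : ∀ᶠ y in 𝓝[<] x, y < x := self_mem_nhdsWithin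
  obtain ⟨y, ⟨hy1, hy2⟩, hylt'⟩ := ((hev.and hev2).and hev3).exists
  have : slope (deriv ψ) x y = (deriv ψ y - deriv ψ x) / (y - x) := by
    simp [slope_def_field]
  rw [this, ← h] at hy1
  have hneg : y - x < 0 := by linarith
  have : deriv ψ y - 0 < 0 := by
    by_contra hc
    push_neg at hc
    have := div_nonpos_of_nonneg_of_nonpos hc hneg.le
    linarith
  have := hnonneg y hy2.le
  linarith
end

section
/- For every constant A ≥ 0 one has φ_A'(x) < 0 and φ_A''(x) > 0 for all x ≥ 0; in particular φ_A is strictly decreasing and strictly convex on [0,∞). -/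
/-! Write the equation as `a f'' + b f' = r f` with `a > 0`, `b' < r`, `r > 0`, and `f > 0`
antitone. Antitonicity gives `f' ≤ 0`; at a zero of `f'` the equation forces `f'' = r f / a > 0`,
which would push `f'` above zero just to the right, so `f' < 0`. Differentiating the equation, at
a zero of `f''` one gets `a f''' = (r - b') f' < 0`, so `f''` can only cross zero downwards: once
`f'' ≤ 0` it stays so, `f'` stays below a negative constant, and `f` eventually becomes negative.
Hence `f'' > 0`. -/

open Set Filter

lemma HasDerivAt.nonpos_of_isMaxOn_Ici {g : ℝ → ℝ} {g' x : ℝ} (hd : HasDerivAt g g' x)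
    (hmax : IsMaxOn g (Ici x) x) : g' ≤ 0 := by
  refine le_of_tendsto hd.tendsto_slope_zero_right ?_
  filter_upwards [self_mem_nhdsWithin] with t (ht : 0 < t)
  have hle : g (x + t) ≤ g x := isMaxOn_iff.mp hmax (x + t) (by simp [ht.le])
  exact mul_nonpos_of_nonneg_of_nonpos (inv_nonneg.2 ht.le) (sub_nonpos.2 hle)

lemma HasDerivAt.eq_zero_of_eqOn_Ici {F : ℝ → ℝ} {F' a x : ℝ} (hd : HasDerivAt F F' x)
    (hx : a ≤ x) (hF : EqOn F 0 (Ici a)) : F' = 0 :=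
  (uniqueDiffOn_Ici a x hx).eq_deriv _ hd.hasDerivWithinAt
    ((hasDerivWithinAt_const x _ 0).congr hF (hF hx))

lemma nonpos_of_hasDerivAt_neg_of_eq_zero {g g' : ℝ → ℝ} {a : ℝ}
    (hg : ∀ x ≥ a, HasDerivAt g (g' x) x) (ha : g a ≤ 0)
    (hzero : ∀ x ≥ a, g x = 0 → g' x < 0) : ∀ x ≥ a, g x ≤ 0 := fun _ hx =>
  image_le_of_deriv_right_lt_deriv_boundary' (B := 0) (B' := 0)
    (fun y hy => (hg y hy.1).continuousAt.continuousWithinAt)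
    (fun y hy => (hg y hy.1).hasDerivWithinAt) ha continuousOn_const
    (fun y _ => hasDerivWithinAt_const y _ 0) (fun y hy => hzero y hy.1) ⟨hx, le_rfl⟩

lemma tendsto_atBot_of_deriv_le_neg {f : ℝ → ℝ} {a c : ℝ} (hf : Differentiable ℝ f)
    (hc : c < 0) (hle : ∀ x ≥ a, deriv f x ≤ c) : Tendsto f atTop atBot := by
  have hlin : ∀ x ≥ a, f x ≤ f a + c * (x - a) := fun x hx => by
    have := (convex_Ici a).image_sub_le_mul_sub_of_deriv_le hf.continuous.continuousOn
      hf.differentiableOn (fun y hy => hle y (interior_subset hy)) a (mem_Ici.2 le_rfl) x hx hx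
    linarith
  refine tendsto_atBot_mono' atTop ((eventually_ge_atTop a).mono hlin) ?_
  exact tendsto_atBot_add_const_left _ _
    ((tendsto_atTop_add_const_right _ _ tendsto_id).const_mul_atTop_of_neg hc)

section SecondOrderODE

variable {r : ℝ} {a b f : ℝ → ℝ}

lemma deriv_neg_of_ode (hr : 0 < r) (ha : ∀ x ≥ 0, 0 < a x) (hf : Differentiable ℝ f)
    (hf1 : Differentiable ℝ (deriv f)) (hpos : ∀ x ≥ 0, 0 < f x) (hanti : AntitoneOn f (Ici 0))
    (ode : ∀ x ≥ 0, a x * deriv (deriv f) x + b x * deriv f x - r * f x = 0) :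
    ∀ x ≥ 0, deriv f x < 0 := by
  have hnonpos : ∀ x ≥ 0, deriv f x ≤ 0 := fun x hx =>
    (hf x).hasDerivAt.nonpos_of_isMaxOn_Ici
      (isMaxOn_iff.2 fun y hy => hanti hx (le_trans hx hy) hy)
  intro x hx
  refine lt_of_le_of_ne (hnonpos x hx) fun hzero => ?_
  have hf2_pos : 0 < deriv (deriv f) x := by
    have heq : a x * deriv (deriv f) x = r * f x := by
      have hode := ode x hx
      rw [hzero, mul_zero] at hode
      linarith
    exact pos_of_mul_pos_right (heq ▸ mul_pos hr (hpos x hx)) (ha x hx).le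
  have hmax : IsMaxOn (deriv f) (Ici x) x :=
    isMaxOn_iff.2 fun y hy => hzero ▸ hnonpos y (le_trans hx hy)
  linarith [(hf1 x).hasDerivAt.nonpos_of_isMaxOn_Ici hmax]

lemma deriv_deriv_deriv_neg_of_ode (ha_diff : Differentiable ℝ a)
    (hb_diff : Differentiable ℝ b) (hf : Differentiable ℝ f) (hf1 : Differentiable ℝ (deriv f))
    (hf2 : Differentiable ℝ (deriv (deriv f)))
    (ode : ∀ x ≥ 0, a x * deriv (deriv f) x + b x * deriv f x - r * f x = 0)
    {x : ℝ} (hx : 0 ≤ x) (ha : 0 < a x) (hb : deriv b x < r) (hf1_neg : deriv f x < 0)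
    (hinfl : deriv (deriv f) x = 0) : deriv (deriv (deriv f)) x < 0 := by
  have hode' := (((ha_diff x).hasDerivAt.mul (hf2 x).hasDerivAt).add
      ((hb_diff x).hasDerivAt.mul (hf1 x).hasDerivAt) |>.sub
      ((hf x).hasDerivAt.const_mul r)).eq_zero_of_eqOn_Ici hx fun y hy => ode y hy
  rw [hinfl] at hode'
  have heq : a x * deriv (deriv (deriv f)) x = (r - deriv b x) * deriv f x := by linarith
  exact neg_of_mul_neg_right (heq ▸ mul_neg_of_pos_of_neg (sub_pos.2 hb) hf1_neg) ha.le

lemma deriv_deriv_pos_of_ode (hr : 0 < r) (ha : ∀ x ≥ 0, 0 < a x)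
    (ha_diff : Differentiable ℝ a) (hb_diff : Differentiable ℝ b) (hb : ∀ x ≥ 0, deriv b x < r)
    (hf : Differentiable ℝ f) (hf1 : Differentiable ℝ (deriv f))
    (hf2 : Differentiable ℝ (deriv (deriv f))) (hpos : ∀ x ≥ 0, 0 < f x)
    (hanti : AntitoneOn f (Ici 0))
    (ode : ∀ x ≥ 0, a x * deriv (deriv f) x + b x * deriv f x - r * f x = 0) :
    ∀ x ≥ 0, 0 < deriv (deriv f) x := by
  have hf1_neg := deriv_neg_of_ode hr ha hf hf1 hpos hanti ode
  intro x₀ hx₀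
  by_contra! hx₀_nonpos
  have hconcave : ∀ x ≥ x₀, deriv (deriv f) x ≤ 0 :=
    nonpos_of_hasDerivAt_neg_of_eq_zero (fun x _ => (hf2 x).hasDerivAt) hx₀_nonpos
      fun x hx hinfl => have hx0 := le_trans hx₀ hx
        deriv_deriv_deriv_neg_of_ode ha_diff hb_diff hf hf1 hf2 ode hx0 (ha x hx0) (hb x hx0)
          (hf1_neg x hx0) hinfl
  have hf1_anti : AntitoneOn (deriv f) (Ici x₀) :=
    antitoneOn_of_deriv_nonpos (convex_Ici x₀) hf1.continuous.continuousOn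
      hf1.differentiableOn fun x hx => hconcave x (interior_subset hx)
  have hf_bot : Tendsto f atTop atBot :=
    tendsto_atBot_of_deriv_le_neg hf (hf1_neg x₀ hx₀)
      fun x hx => hf1_anti (mem_Ici.2 le_rfl) hx hx
  obtain ⟨x, hfx, hx⟩ :=
    ((hf_bot.eventually (eventually_le_atBot 0)).and (eventually_ge_atTop 0)).exists
  exact (hpos x hx).not_ge hfx

end SecondOrderODE

theorem stmt_9_general
    (r : ℝ) (hr : 0 < r)
    (μ σ : ℝ → ℝ) (hμ : ContDiff ℝ 1 μ) (hσ : ContDiff ℝ 1 σ)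
    (hσpos : ∀ x ≥ (0:ℝ), 0 < σ x ^ 2)
    (hμderiv : ∀ x ≥ (0:ℝ), deriv μ x < r)
    (φ : ℝ → ℝ → ℝ)
    (hφC : ∀ A ≥ (0:ℝ), ContDiff ℝ 3 (φ A))
    (hφpos : ∀ A ≥ (0:ℝ), ∀ x ≥ (0:ℝ), 0 < φ A x)
    (hφanti : ∀ A ≥ (0:ℝ), AntitoneOn (φ A) (Ici (0:ℝ)))
    (hφODE : ∀ A ≥ (0:ℝ), ∀ x ≥ (0:ℝ),
      (1/2) * σ x ^ 2 * deriv (deriv (φ A)) x + (μ x - A) * deriv (φ A) x - r * φ A x = 0) :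
    ∀ A ≥ (0:ℝ),
      (∀ x ≥ (0:ℝ), deriv (φ A) x < 0) ∧
      (∀ x ≥ (0:ℝ), 0 < deriv (deriv (φ A)) x) ∧
      StrictAntiOn (φ A) (Ici (0:ℝ)) ∧
      StrictConvexOn ℝ (Ici (0:ℝ)) (φ A) := by
  intro A hA
  have hf3 := hφC A hA
  have hf : Differentiable ℝ (φ A) := hf3.differentiable (by norm_num)
  have hf1 : Differentiable ℝ (deriv (φ A)) :=
    (hf3.iterate_deriv' 2 1).differentiable (by norm_num)
  have hf2 : Differentiable ℝ (deriv (deriv (φ A))) :=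
    (hf3.iterate_deriv' 1 2).differentiable (by norm_num)
  have ha_diff : Differentiable ℝ fun x => 1 / 2 * σ x ^ 2 :=
    ((hσ.differentiable (by norm_num)).pow 2).const_mul _
  have hb_diff : Differentiable ℝ fun x => μ x - A :=
    (hμ.differentiable (by norm_num)).sub_const A
  have ha : ∀ x ≥ (0:ℝ), 0 < 1 / 2 * σ x ^ 2 := fun x hx => by linarith [hσpos x hx]
  have hb : ∀ x ≥ (0:ℝ), deriv (fun x => μ x - A) x < r := fun x hx => by
    simpa only [deriv_sub_const] using hμderiv x hx
  have hf1_neg := deriv_neg_of_ode hr ha hf hf1 (hφpos A hA) (hφanti A hA) (hφODE A hA)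
  have hf2_pos := deriv_deriv_pos_of_ode hr ha ha_diff hb_diff hb hf hf1 hf2 (hφpos A hA)
    (hφanti A hA) (hφODE A hA)
  refine ⟨hf1_neg, hf2_pos, ?_, ?_⟩
  · exact strictAntiOn_of_deriv_neg (convex_Ici 0) hf.continuous.continuousOn
      fun x hx => hf1_neg x (interior_subset hx)
  · exact strictConvexOn_of_deriv2_pos' (convex_Ici 0) hf.continuous.continuousOn
      fun x hx => hf2_pos x hx

/-- for every A ≥ 0, φ_A' < 0 and φ_A'' > 0 on [0,∞); in particular
φ_A is strictly decreasing and strictly convex on [0,∞). -/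
theorem stmt_9
    (r : ℝ) (hr : 0 < r)
    (μ σ : ℝ → ℝ) (hμ : ContDiff ℝ 1 μ) (hσ : ContDiff ℝ 1 σ)
    (hσpos : ∀ x ≥ (0:ℝ), 0 < σ x ^ 2)
    (hμderiv : ∀ x ≥ (0:ℝ), deriv μ x < r)
    (φ : ℝ → ℝ → ℝ)
    (hφC : ∀ A ≥ (0:ℝ), ContDiff ℝ 3 (φ A))
    (hφ0 : ∀ A ≥ (0:ℝ), φ A 0 = 1)
    (hφpos : ∀ A ≥ (0:ℝ), ∀ x ≥ (0:ℝ), 0 < φ A x)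
    (hφanti : ∀ A ≥ (0:ℝ), AntitoneOn (φ A) (Ici (0:ℝ)))
    (hφlim : ∀ A ≥ (0:ℝ), Tendsto (φ A) atTop (nhds 0))
    (hφODE : ∀ A ≥ (0:ℝ), ∀ x ≥ (0:ℝ),
      (1/2) * σ x ^ 2 * deriv (deriv (φ A)) x + (μ x - A) * deriv (φ A) x - r * φ A x = 0) :
    ∀ A ≥ (0:ℝ),
      (∀ x ≥ (0:ℝ), deriv (φ A) x < 0) ∧
      (∀ x ≥ (0:ℝ), 0 < deriv (deriv (φ A)) x) ∧
      StrictAntiOn (φ A) (Ici (0:ℝ)) ∧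
      StrictConvexOn ℝ (Ici (0:ℝ)) (φ A) :=
  stmt_9_general r hr μ σ hμ hσ hσpos hμderiv φ hφC hφpos hφanti hφODE
end

section
/- Let n ≥ 1 be an integer and K > 0, and suppose b̂ satisfies 0 < b̂ ≤ b* and ψ(b̂)/ψ'(b̂) − φ_{nK}(b̂)/φ_{nK}'(b̂) = K/r. Set D₁ := (−(K/r)·φ_{nK}'(b̂)) / (φ_{nK}(b̂)ψ'(b̂) − φ_{nK}'(b̂)ψ(b̂)) and D₄ := (−(K/r)·ψ'(b̂)) / (φ_{nK}(b̂)ψ'(b̂) − φ_{nK}'(b̂)ψ(b̂)), and define V(x) := D₁ψ(x) for 0 ≤ x ≤ b̂ and V(x) := D₄φ_{nK}(x) + K/r for x ≥ b̂. Then V is well defined, continuously differentiable on (0,∞) with V'(b̂) = 1, and V is concave on [0,∞). -/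
set_option maxHeartbeats 1000000


open Set Filter Topology

/-- the candidate equilibrium value function V glued from D₁ψ on [0,b̂]
and D₄φ_{nK} + K/r on [b̂,∞) (with 0 < b̂ ≤ b* solving the threshold equation) is well
defined (the two pieces agree at b̂), continuously differentiable on (0,∞) with
V'(b̂) = 1, and concave on [0,∞). -/
theorem stmt_11
    (r c : ℝ) (hr : 0 < r) (hc : 0 < c)
    (μ σ : ℝ → ℝ) (hμ : ContDiff ℝ 1 μ) (hσ : ContDiff ℝ 1 σ)
    (hσpos : ∀ x ≥ (0:ℝ), 0 < σ x ^ 2)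
    (hμderiv : ∀ x ≥ (0:ℝ), deriv μ x < r)
    (hμ0 : 0 < μ 0)
    (hμc : ∀ x ≥ c, μ x ≤ r * x - 1 / c)
    (ψ : ℝ → ℝ) (hψC : ContDiff ℝ 3 ψ)
    (hψ0 : ψ 0 = 0) (hψd0 : deriv ψ 0 = 1)
    (hψpos : ∀ x > (0:ℝ), 0 < ψ x)
    (hψmono : MonotoneOn ψ (Ici (0:ℝ)))
    (hψODE : ∀ x ≥ (0:ℝ),
      (1/2) * σ x ^ 2 * deriv (deriv ψ) x + μ x * deriv ψ x - r * ψ x = 0)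
    (hψdpos : ∀ x ≥ (0:ℝ), 0 < deriv ψ x)
    (bstar : ℝ) (hbstar : 0 < bstar)
    (hconc : ∀ x, 0 ≤ x → x < bstar → deriv (deriv ψ) x < 0)
    (hconv : ∀ x, bstar < x → 0 < deriv (deriv ψ) x)
    (φ : ℝ → ℝ → ℝ)
    (hφC : ∀ A ≥ (0:ℝ), ContDiff ℝ 2 (φ A))
    (hφ0 : ∀ A ≥ (0:ℝ), φ A 0 = 1)
    (hφpos : ∀ A ≥ (0:ℝ), ∀ x ≥ (0:ℝ), 0 < φ A x)
    (hφanti : ∀ A ≥ (0:ℝ), AntitoneOn (φ A) (Ici (0:ℝ)))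
    (hφlim : ∀ A ≥ (0:ℝ), Tendsto (φ A) atTop (nhds 0))
    (hφODE : ∀ A ≥ (0:ℝ), ∀ x ≥ (0:ℝ),
      (1/2) * σ x ^ 2 * deriv (deriv (φ A)) x + (μ x - A) * deriv (φ A) x - r * φ A x = 0)
    (hφdneg : ∀ A ≥ (0:ℝ), ∀ x ≥ (0:ℝ), deriv (φ A) x < 0)
    (hφddpos : ∀ A ≥ (0:ℝ), ∀ x ≥ (0:ℝ), 0 < deriv (deriv (φ A)) x)
    (n : ℕ) (hn : 1 ≤ n) (K : ℝ) (hK : 0 < K)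
    (bh : ℝ) (hbh : 0 < bh) (hbhle : bh ≤ bstar)
    (hbheq : ψ bh / deriv ψ bh
      - φ ((n : ℝ) * K) bh / deriv (φ ((n : ℝ) * K)) bh = K / r)
    (D1 D4 : ℝ)
    (hD1 : D1 = (-(K / r) * deriv (φ ((n : ℝ) * K)) bh) /
      (φ ((n : ℝ) * K) bh * deriv ψ bh - deriv (φ ((n : ℝ) * K)) bh * ψ bh))
    (hD4 : D4 = (-(K / r) * deriv ψ bh) /
      (φ ((n : ℝ) * K) bh * deriv ψ bh - deriv (φ ((n : ℝ) * K)) bh * ψ bh))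
    (V : ℝ → ℝ)
    (hVlo : ∀ x, 0 ≤ x → x ≤ bh → V x = D1 * ψ x)
    (hVhi : ∀ x ≥ bh, V x = D4 * φ ((n : ℝ) * K) x + K / r) :
    D1 * ψ bh = D4 * φ ((n : ℝ) * K) bh + K / r ∧
    ContDiffOn ℝ 1 V (Ioi (0:ℝ)) ∧
    deriv V bh = 1 ∧
    ConcaveOn ℝ (Ici (0:ℝ)) V := by
  set A : ℝ := (n : ℝ) * K with hAdef
  have hA : (0:ℝ) ≤ A := by positivity
  set Φ : ℝ → ℝ := φ A with hΦdef
  have hbh0 : (0:ℝ) ≤ bh := le_of_lt hbh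
  have hb : 0 < deriv ψ bh := hψdpos bh hbh0
  have hq : deriv Φ bh < 0 := hφdneg A hA bh hbh0
  have hp : 0 < Φ bh := hφpos A hA bh hbh0
  have ha : 0 < ψ bh := hψpos bh hbh
  have hKr : 0 < K / r := div_pos hK hr
  set W : ℝ := Φ bh * deriv ψ bh - deriv Φ bh * ψ bh with hWdef
  have hb' : deriv ψ bh ≠ 0 := ne_of_gt hb
  have hq' : deriv Φ bh ≠ 0 := ne_of_lt hq
  have hr' : r ≠ 0 := ne_of_gt hr
  have hWeq : W = -(K / r) * deriv Φ bh * deriv ψ bh := by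
    field_simp at hbheq
    rw [hWdef]
    field_simp
    nlinarith [hbheq]
  have hWpos : 0 < W := by
    rw [hWeq]; nlinarith
  have hW' : W ≠ 0 := ne_of_gt hWpos
  have hD1b : D1 * deriv ψ bh = 1 := by
    rw [hD1, div_mul_eq_mul_div, div_eq_one_iff_eq hW']
    linarith [hWeq]
  have hD4q : D4 * deriv Φ bh = 1 := by
    rw [hD4, div_mul_eq_mul_div, div_eq_one_iff_eq hW']
    linarith [hWeq]
  have hglue : D1 * ψ bh = D4 * Φ bh + K / r := by
    rw [hD1, hD4]
    rw [div_mul_eq_mul_div, div_mul_eq_mul_div, div_add' _ _ _ hW', div_eq_div_iff hW' hW']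
    rw [hWdef]; ring
  have hD1pos : 0 < D1 := by nlinarith
  have hD4neg : D4 < 0 := by nlinarith
  -- smoothness facts
  have hψdiff : Differentiable ℝ ψ := hψC.differentiable (by norm_num)
  have hΦC : ContDiff ℝ 2 Φ := hφC A hA
  have hΦdiff : Differentiable ℝ Φ := hΦC.differentiable (by norm_num)
  have hψ'C : Continuous (deriv ψ) := hψC.continuous_deriv (by norm_num)
  have hΦ'C : Continuous (deriv Φ) := hΦC.continuous_deriv (by norm_num)
  have hψ'diff : Differentiable ℝ (deriv ψ) := by
    have h2 : ContDiff ℝ 2 (deriv ψ) := by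
      have := (contDiff_succ_iff_deriv (n := 2)).mp (by exact_mod_cast hψC)
      exact this.2.2
    exact h2.differentiable (by norm_num)
  have hΦ'diff : Differentiable ℝ (deriv Φ) := by
    have h1 : ContDiff ℝ 1 (deriv Φ) := by
      have := (contDiff_succ_iff_deriv (n := 1)).mp (by exact_mod_cast hΦC)
      exact this.2.2
    exact h1.differentiable (by norm_num)
  -- pieces
  have hf1d : ∀ x : ℝ, HasDerivAt (fun y => D1 * ψ y) (D1 * deriv ψ x) x :=
    fun x => ((hψdiff x).hasDerivAt).const_mul D1
  have hf2d : ∀ x : ℝ, HasDerivAt (fun y => D4 * Φ y + K / r) (D4 * deriv Φ x) x :=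
    fun x => (((hΦdiff x).hasDerivAt).const_mul D4).add_const _
  -- derivative at bh is 1
  have hderivbh : HasDerivAt V 1 bh := by
    have hevL : V =ᶠ[𝓝[Iic bh] bh] fun y => D1 * ψ y := by
      have hmem : Ioi (0:ℝ) ∈ 𝓝[Iic bh] bh := nhdsWithin_le_nhds (Ioi_mem_nhds hbh)
      filter_upwards [hmem, self_mem_nhdsWithin] with y hy hy'
      exact hVlo y (le_of_lt hy) hy'
    have hevR : V =ᶠ[𝓝[Ici bh] bh] fun y => D4 * Φ y + K / r := by
      filter_upwards [self_mem_nhdsWithin] with y hy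
      exact hVhi y hy
    have hL : HasDerivWithinAt V 1 (Iic bh) bh := by
      have := ((hf1d bh).hasDerivWithinAt (s := Iic bh)).congr_of_eventuallyEq hevL
        (hVlo bh hbh0 le_rfl)
      rwa [hD1b] at this
    have hR : HasDerivWithinAt V 1 (Ici bh) bh := by
      have := ((hf2d bh).hasDerivWithinAt (s := Ici bh)).congr_of_eventuallyEq hevR
        (hVhi bh le_rfl)
      rwa [hD4q] at this
    have hU := hL.union hR
    rw [Iic_union_Ici] at hU
    exact hU.hasDerivAt (by simp)
  -- derivative everywhere on Ioi 0
  set g : ℝ → ℝ := fun x => if x ≤ bh then D1 * deriv ψ x else D4 * deriv Φ x with hgdef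
  have hgbh : g bh = 1 := by simp [hgdef, hD1b]
  have hVg : ∀ x ∈ Ioi (0:ℝ), HasDerivAt V (g x) x := by
    intro x hx
    rcases lt_trichotomy x bh with hlt | heq | hgt
    · have hg : g x = D1 * deriv ψ x := by simp [hgdef, le_of_lt hlt]
      rw [hg]
      refine (hf1d x).congr_of_eventuallyEq ?_
      filter_upwards [Ioo_mem_nhds hx hlt] with y hy
      exact hVlo y (le_of_lt hy.1) (le_of_lt hy.2)
    · subst heq; rw [hgbh]; exact hderivbh
    · have hg : g x = D4 * deriv Φ x := by simp [hgdef, not_le.mpr hgt]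
      rw [hg]
      refine (hf2d x).congr_of_eventuallyEq ?_
      filter_upwards [Ioi_mem_nhds hgt] with y hy
      exact hVhi y (le_of_lt hy)
  have hderivV : ∀ x ∈ Ioi (0:ℝ), deriv V x = g x := fun x hx => (hVg x hx).deriv
  have hVdiffOn : DifferentiableOn ℝ V (Ioi (0:ℝ)) :=
    fun x hx => ((hVg x hx).differentiableAt).differentiableWithinAt
  -- continuity of g
  have hgcont : Continuous g := by
    rw [hgdef]
    apply Continuous.if_le
    · exact continuous_const.mul hψ'C
    · exact continuous_const.mul hΦ'C
    · exact continuous_id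
    · exact continuous_const
    · intro x hx; rw [hx, hD1b, hD4q]
  -- monotonicity pieces
  have hψ'anti : AntitoneOn (deriv ψ) (Icc 0 bh) := by
    apply antitoneOn_of_deriv_nonpos (convex_Icc 0 bh) (hψ'C.continuousOn)
      (hψ'diff.differentiableOn)
    intro x hx
    rw [interior_Icc] at hx
    exact le_of_lt (hconc x (le_of_lt hx.1) (lt_of_lt_of_le hx.2 hbhle))
  have hΦ'mono : MonotoneOn (deriv Φ) (Ici bh) := by
    apply monotoneOn_of_deriv_nonneg (convex_Ici bh) (hΦ'C.continuousOn)
      (hΦ'diff.differentiableOn)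
    intro x hx
    rw [interior_Ici] at hx
    exact le_of_lt (hφddpos A hA x (le_trans hbh0 (le_of_lt hx)))
  have hganti : AntitoneOn g (Ioi (0:ℝ)) := by
    intro x hx y hy hxy
    by_cases hxb : x ≤ bh
    · by_cases hyb : y ≤ bh
      · simp only [hgdef, if_pos hxb, if_pos hyb]
        exact mul_le_mul_of_nonneg_left
          (hψ'anti ⟨le_of_lt hx, hxb⟩ ⟨le_of_lt hy, hyb⟩ hxy) (le_of_lt hD1pos)
      · push_neg at hyb
        simp only [hgdef, if_pos hxb, if_neg (not_le.mpr hyb)]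
        have h1 : D4 * deriv Φ y ≤ D4 * deriv Φ bh :=
          mul_le_mul_of_nonpos_left
            (hΦ'mono (self_mem_Ici) (le_of_lt hyb) (le_of_lt hyb)) (le_of_lt hD4neg)
        have h2 : D1 * deriv ψ bh ≤ D1 * deriv ψ x :=
          mul_le_mul_of_nonneg_left
            (hψ'anti ⟨le_of_lt hx, hxb⟩ ⟨hbh0, le_rfl⟩ hxb) (le_of_lt hD1pos)
        rw [hD1b] at h2; rw [hD4q] at h1
        linarith
    · push_neg at hxb
      have hyb : bh < y := lt_of_lt_of_le hxb hxy
      simp only [hgdef, if_neg (not_le.mpr hxb), if_neg (not_le.mpr hyb)]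
      exact mul_le_mul_of_nonpos_left
        (hΦ'mono (le_of_lt hxb : bh ≤ x) (le_of_lt hyb : bh ≤ y) hxy) (le_of_lt hD4neg)
  -- continuity of V on Ici 0
  have hVcont : ContinuousOn V (Ici (0:ℝ)) := by
    have hVdef : EqOn V (fun x => if x ≤ bh then D1 * ψ x else D4 * Φ x + K / r) (Ici 0) := by
      intro x hx
      by_cases hxb : x ≤ bh
      · simp only [if_pos hxb]; exact hVlo x hx hxb
      · push_neg at hxb
        simp only [if_neg (not_le.mpr hxb)]; exact hVhi x (le_of_lt hxb)
    refine ContinuousOn.congr ?_ hVdef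
    apply Continuous.continuousOn
    apply Continuous.if_le
    · exact continuous_const.mul hψdiff.continuous
    · exact (continuous_const.mul hΦdiff.continuous).add continuous_const
    · exact continuous_id
    · exact continuous_const
    · intro x hx; rw [hx]; exact hglue
  refine ⟨hglue, ?_, ?_, ?_⟩
  · -- ContDiffOn
    rw [show (1 : WithTop ℕ∞) = 0 + 1 from rfl]
    rw [contDiffOn_succ_iff_deriv_of_isOpen isOpen_Ioi]
    refine ⟨hVdiffOn, by simp, ?_⟩
    rw [contDiffOn_zero]
    exact (hgcont.continuousOn).congr hderivV
  · exact hderivbh.deriv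
  · apply AntitoneOn.concaveOn_of_deriv (convex_Ici 0) hVcont
    · rw [interior_Ici]; exact hVdiffOn
    · rw [interior_Ici]
      intro x hx y hy hxy
      rw [hderivV x hx, hderivV y hy]
      exact hganti hx hy hxy
end
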